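/- arXiv:2509.01216 — 2 statements merged into one kernel-verified Lean document; each statement's English description precedes it below -/
import Mathlib

section
/- For integers m ≤ k with mk > 0 and any n ≥ 1, writing a = min(|m|,|k|) and b = max(|m|,|k|), one has (−1)^{min(|m|,k)} ∑_{j=m}^{k} (−1)^j p̄(n − j²) = op_{2,1}(n, a) + (−1)^{m+k} op_{2,1}(n, b+1). -/
/-- An overpartition of `n`: non-overlined parts with multiplicities given by `count`,
overlined parts given by the finite set `over` (each value overlined at most once). -/
structure Overpartition (n : ℕ) where
  count : ℕ →₀ ℕ
  overParts : Finset ℕ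
  count_zero : count 0 = 0
  zero_not_over : 0 ∉ overParts
  weight : (count.sum fun k m => k * m) + ∑ k ∈ overParts, k = n

/-- The number of overpartitions of `n`. -/
noncomputable def pbar (n : ℕ) : ℕ := Nat.card (Overpartition n)

/-- `pbar` extended to the integers by `0` on negatives. -/
noncomputable def pbarZ (m : ℤ) : ℕ := if m < 0 then 0 else pbar m.toNat

/-- The smallest odd positive integer that is not a non-overlined part. -/
noncomputable def mex21 {n : ℕ} (π : Overpartition n) : ℕ := sInf {m : ℕ | m % 2 = 1 ∧ π.count m = 0}

/-- The number of overpartitions `π` of `n` with `mex21 π ≥ 2k+1` and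
`mex21 π ≡ 2k+1 (mod 4)`. -/
noncomputable def op21 (n k : ℕ) : ℕ :=
  Nat.card {π : Overpartition n // 2 * k + 1 ≤ mex21 π ∧ mex21 π % 4 = (2 * k + 1) % 4}

/-- Total number of occurrences of the value `p` (overlined or not) in `π`. -/
noncomputable def multTotal {n : ℕ} (π : Overpartition n) (p : ℕ) : ℕ :=
  π.count p + if p ∈ π.overParts then 1 else 0

namespace Aux
open Finset

lemma Overpartition.ext' {n : ℕ} {π σ : Overpartition n} (h1 : π.count = σ.count)
    (h2 : π.overParts = σ.overParts) : π = σ := by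
  cases π; cases σ; simp_all

lemma count_le {n : ℕ} (π : Overpartition n) (p : ℕ) : π.count p ≤ n := by
  rcases Nat.eq_zero_or_pos p with hp | hp
  · simp [hp, π.count_zero]
  by_cases hmem : p ∈ π.count.support
  · have h1 : p * π.count p ≤ π.count.sum fun k m => k * m := by
      exact Finset.single_le_sum (f := fun k => k * π.count k) (fun i _ => Nat.zero_le _) hmem
    have := π.weight
    calc π.count p ≤ p * π.count p := Nat.le_mul_of_pos_left _ hp
    _ ≤ n := by omega
  · simp [Finsupp.notMem_support_iff.mp hmem]

lemma over_le {n : ℕ} (π : Overpartition n) {q : ℕ} (hq : q ∈ π.overParts) : q ≤ n := by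
  have h1 : q ≤ ∑ k ∈ π.overParts, k :=
    Finset.single_le_sum (f := fun i => i) (fun i _ => Nat.zero_le _) hq
  have := π.weight; omega

lemma count_eq_zero_of_gt {n : ℕ} (π : Overpartition n) {p : ℕ} (hp : n < p) : π.count p = 0 := by
  by_cases hmem : p ∈ π.count.support
  · have h1 : p * π.count p ≤ π.count.sum fun k m => k * m :=
      Finset.single_le_sum (f := fun k => k * π.count k) (fun i _ => Nat.zero_le _) hmem
    have h2 : 1 ≤ π.count p := Nat.one_le_iff_ne_zero.mpr (Finsupp.mem_support_iff.mp hmem)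
    have h3 : p ≤ p * π.count p := Nat.le_mul_of_pos_right p h2
    have := π.weight
    omega
  · exact Finsupp.notMem_support_iff.mp hmem

instance instFinite (n : ℕ) : Finite (Overpartition n) := by
  have : Function.Injective (fun π : Overpartition n =>
      ((fun i : Fin (n+1) => (⟨π.count i, by have := count_le π i; omega⟩ : Fin (n+1)),
        fun i : Fin (n+1) => decide ((i : ℕ) ∈ π.overParts)) :
        (Fin (n+1) → Fin (n+1)) × (Fin (n+1) → Bool))) := by
    intro π σ h
    simp only [Prod.mk.injEq] at h
    apply Overpartition.ext'
    · ext p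
      rcases le_or_gt p n with hp | hp
      · have := congrFun h.1 ⟨p, by omega⟩
        simpa using this
      · rw [count_eq_zero_of_gt π hp, count_eq_zero_of_gt σ hp]
    · ext q
      constructor
      · intro hq
        have := congrFun h.2 ⟨q, by have := over_le π hq; omega⟩
        simpa [hq] using this.symm
      · intro hq
        have := congrFun h.2 ⟨q, by have := over_le σ hq; omega⟩
        simpa [hq] using this
  have : Finite (Overpartition n) := Finite.of_injective _ this
  exact this

lemma mex_mem {n : ℕ} (π : Overpartition n) :
    (mex21 π) % 2 = 1 ∧ π.count (mex21 π) = 0 := by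
  have hne : {m : ℕ | m % 2 = 1 ∧ π.count m = 0}.Nonempty := by
    refine ⟨2 * (π.count.support.sup id) + 1, by omega, ?_⟩
    by_contra hc
    have hmem : 2 * (π.count.support.sup id) + 1 ∈ π.count.support :=
      Finsupp.mem_support_iff.mpr hc
    have h2 := Finset.le_sup (f := id) hmem
    simp only [id] at h2
    omega
  exact Nat.sInf_mem hne

lemma mex_ge_iff {n : ℕ} (π : Overpartition n) (k : ℕ) :
    2 * k + 1 ≤ mex21 π ↔ ∀ i < k, π.count (2 * i + 1) ≠ 0 := by
  constructor
  · intro h i hi hc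
    have := Nat.sInf_le (show 2*i+1 ∈ {m : ℕ | m % 2 = 1 ∧ π.count m = 0} from ⟨by omega, hc⟩)
    unfold mex21 at h; omega
  · intro h
    by_contra hc
    push_neg at hc
    have hm := mex_mem π
    set M := mex21 π with hM
    have heq : M = 2 * (M / 2) + 1 := by omega
    exact h (M / 2) (by omega) (by rw [← heq]; exact hm.2)

noncomputable def D (k : ℕ) : ℕ →₀ ℕ := ∑ i ∈ Finset.range k, Finsupp.single (2 * i + 1) 1

lemma D_apply (k x : ℕ) : D k x = if x % 2 = 1 ∧ x < 2 * k then 1 else 0 := by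
  induction k with
  | zero => simp [D]
  | succ k ih =>
    rw [D, Finset.sum_range_succ, ← D, Finsupp.add_apply, ih, Finsupp.single_apply]
    split_ifs <;> omega

lemma odd_sum (k : ℕ) : ∑ i ∈ Finset.range k, (2 * i + 1) = k ^ 2 := by
  induction k with
  | zero => simp
  | succ k ih => rw [Finset.sum_range_succ, ih]; ring

lemma D_sum (k : ℕ) : (D k).sum (fun a m => a * m) = k ^ 2 := by
  rw [D, ← Finsupp.sum_finsetSum_index (by intro i; rfl) (by intro a b₁ b₂; ring)]
  rw [← odd_sum k]
  refine Finset.sum_congr rfl fun i _ => ?_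
  rw [Finsupp.sum_single_index (by rfl)]; omega

lemma D_le {n k : ℕ} (π : Overpartition n) (h : ∀ i < k, π.count (2 * i + 1) ≠ 0) :
    D k ≤ π.count := by
  intro x
  rw [D_apply]
  split_ifs with hx
  · have hx2 : x = 2 * (x / 2) + 1 := by omega
    have := h (x / 2) (by omega)
    rw [← hx2] at this
    omega
  · exact Nat.zero_le _

lemma sum_add_D {k : ℕ} (c : ℕ →₀ ℕ) :
    ((c + D k).sum fun a m => a * m) = (c.sum fun a m => a * m) + k ^ 2 := by
  rw [Finsupp.sum_add_index' (by intro a; rfl) (by intro a b₁ b₂; ring), D_sum]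

lemma weight_ge {n k : ℕ} (π : Overpartition n) (h : ∀ i < k, π.count (2 * i + 1) ≠ 0) :
    k ^ 2 ≤ n := by
  have hle := D_le π h
  have hc : (π.count - D k) + D k = π.count := tsub_add_cancel_of_le hle
  have hw := π.weight
  rw [← hc, sum_add_D] at hw
  omega

noncomputable def removeD {n k : ℕ} (π : Overpartition n) (h : ∀ i < k, π.count (2 * i + 1) ≠ 0) :
    Overpartition (n - k ^ 2) where
  count := π.count - D k
  overParts := π.overParts
  count_zero := by
    simp [Finsupp.tsub_apply, π.count_zero]
  zero_not_over := π.zero_not_over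
  weight := by
    have hle := D_le π h
    have hc : (π.count - D k) + D k = π.count := tsub_add_cancel_of_le hle
    have hw := π.weight
    rw [← hc, sum_add_D] at hw
    omega

noncomputable def addD {n k : ℕ} (hkn : k ^ 2 ≤ n) (σ : Overpartition (n - k ^ 2)) :
    Overpartition n where
  count := σ.count + D k
  overParts := σ.overParts
  count_zero := by
    rw [Finsupp.add_apply, σ.count_zero, D_apply]
    simp
  zero_not_over := σ.zero_not_over
  weight := by
    have hw := σ.weight
    rw [sum_add_D]
    omega

lemma addD_count {n k : ℕ} (hkn : k ^ 2 ≤ n) (σ : Overpartition (n - k ^ 2)) :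
    ∀ i < k, (addD hkn σ).count (2 * i + 1) ≠ 0 := by
  intro i hi
  show (σ.count + D k) (2 * i + 1) ≠ 0
  rw [Finsupp.add_apply, D_apply]
  have : (2 * i + 1) % 2 = 1 ∧ 2 * i + 1 < 2 * k := by omega
  simp [this]

noncomputable def equivRemove (n k : ℕ) (hkn : k ^ 2 ≤ n) :
    {π : Overpartition n // ∀ i < k, π.count (2 * i + 1) ≠ 0} ≃ Overpartition (n - k ^ 2) where
  toFun := fun π => removeD π.1 π.2
  invFun := fun σ => ⟨addD hkn σ, addD_count hkn σ⟩
  left_inv := by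
    rintro ⟨π, h⟩
    ext1
    apply Overpartition.ext'
    · show (π.count - D k) + D k = π.count
      exact tsub_add_cancel_of_le (D_le π h)
    · rfl
  right_inv := by
    intro σ
    apply Overpartition.ext'
    · show (σ.count + D k) - D k = σ.count
      exact add_tsub_cancel_right _ _
    · rfl

lemma card_ge (n k : ℕ) :
    Nat.card {π : Overpartition n // 2 * k + 1 ≤ mex21 π} = pbarZ ((n : ℤ) - (k : ℤ) ^ 2) := by
  have e1 : {π : Overpartition n // 2 * k + 1 ≤ mex21 π} ≃
      {π : Overpartition n // ∀ i < k, π.count (2 * i + 1) ≠ 0} :=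
    Equiv.subtypeEquivRight (fun π => mex_ge_iff π k)
  rw [Nat.card_congr e1]
  have hc : ((k ^ 2 : ℕ) : ℤ) = (k : ℤ) ^ 2 := by push_cast; ring
  by_cases hkn : k ^ 2 ≤ n
  · rw [Nat.card_congr (equivRemove n k hkn)]
    have h1 : ¬ ((n : ℤ) - (k : ℤ) ^ 2 < 0) := by omega
    have h2 : ((n : ℤ) - (k : ℤ) ^ 2).toNat = n - k ^ 2 := by omega
    rw [pbarZ, if_neg h1, h2, pbar]
  · have he : IsEmpty {π : Overpartition n // ∀ i < k, π.count (2 * i + 1) ≠ 0} := by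
      constructor
      rintro ⟨π, h⟩
      exact hkn (weight_ge π h)
    rw [Nat.card_of_isEmpty]
    have h1 : (n : ℤ) - (k : ℤ) ^ 2 < 0 := by omega
    rw [pbarZ, if_pos h1]

lemma op_split (n k : ℕ) :
    op21 n k + op21 n (k + 1) = Nat.card {π : Overpartition n // 2 * k + 1 ≤ mex21 π} := by
  classical
  set A : Overpartition n → Prop :=
    fun π => 2 * k + 1 ≤ mex21 π ∧ mex21 π % 4 = (2 * k + 1) % 4 with hA
  set B : Overpartition n → Prop :=
    fun π => 2 * (k + 1) + 1 ≤ mex21 π ∧ mex21 π % 4 = (2 * (k + 1) + 1) % 4 with hB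
  have hdisj : Disjoint A B := by
    rw [Pi.disjoint_iff]
    intro π
    simp only [Prop.disjoint_iff]
    rintro ⟨⟨_, h1⟩, ⟨_, h2⟩⟩
    omega
  have e1 : {π : Overpartition n // 2 * k + 1 ≤ mex21 π} ≃ {π : Overpartition n // A π ∨ B π} := by
    refine Equiv.subtypeEquivRight (fun π => ?_)
    have hodd := (mex_mem π).1
    constructor
    · intro h
      rw [hA, hB]; dsimp only
      omega
    · rintro (⟨h, _⟩ | ⟨h, _⟩) <;> omega
  rw [Nat.card_congr e1, Nat.card_congr (subtypeOrEquiv A B hdisj), Nat.card_sum]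
  rfl

lemma op_rec (n k : ℕ) :
    op21 n k + op21 n (k + 1) = pbarZ ((n : ℤ) - (k : ℤ) ^ 2) := by
  rw [op_split, card_ge]

lemma op_recZ (n a : ℕ) :
    (op21 n a : ℤ) + (op21 n (a + 1) : ℤ) = (pbarZ ((n : ℤ) - (a : ℤ) ^ 2) : ℤ) := by
  exact_mod_cast congrArg (fun x : ℕ => (x : ℤ)) (op_rec n a)

lemma neg_one_pow_natAbs (a : ℤ) : (-1 : ℤ) ^ a.natAbs = if Even a then 1 else -1 := by
  split_ifs with h
  · exact Even.neg_one_pow (Int.natAbs_even.mpr h)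
  · exact Odd.neg_one_pow (Int.natAbs_odd.mpr (Int.not_even_iff_odd.mp h))

lemma neg_one_pow_natAbs_add (a b : ℤ) :
    (-1 : ℤ) ^ (a + b).natAbs = (-1 : ℤ) ^ a.natAbs * (-1 : ℤ) ^ b.natAbs := by
  rw [neg_one_pow_natAbs, neg_one_pow_natAbs, neg_one_pow_natAbs]
  by_cases ha : Even a <;> by_cases hb : Even b <;>
    simp [Int.even_add, ha, hb]

lemma telescope (n : ℕ) (m k : ℤ) (h0 : 0 < m) (hmk : m ≤ k) :
    ∑ j ∈ Finset.Icc m k, (-1 : ℤ) ^ j.natAbs * pbarZ ((n : ℤ) - j ^ 2) =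
      (-1 : ℤ) ^ m.natAbs * op21 n m.natAbs + (-1 : ℤ) ^ k.natAbs * op21 n (k.natAbs + 1) := by
  refine Int.le_induction (motive := fun k _ => ∑ j ∈ Finset.Icc m k, (-1 : ℤ) ^ j.natAbs * pbarZ ((n : ℤ) - j ^ 2) =
      (-1 : ℤ) ^ m.natAbs * op21 n m.natAbs + (-1 : ℤ) ^ k.natAbs * op21 n (k.natAbs + 1))
    ?_ (fun k hk ih => ?_) k hmk
  · rw [Finset.Icc_self, Finset.sum_singleton]
    have hsq : ((m.natAbs : ℤ)) ^ 2 = m ^ 2 := by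
      rw [sq, sq, Int.natAbs_mul_self']
    have := op_recZ n m.natAbs
    rw [hsq] at this
    rw [← this]
    ring
  · have hins : Finset.Icc m (k + 1) = insert (k + 1) (Finset.Icc m k) := by
      ext x
      simp only [Finset.mem_Icc, Finset.mem_insert]
      omega
    have hnotmem : (k + 1) ∉ Finset.Icc m k := by
      simp only [Finset.mem_Icc]
      omega
    rw [hins, Finset.sum_insert hnotmem, ih]
    have habs : (k + 1).natAbs = k.natAbs + 1 := by omega
    have hsq : (((k.natAbs + 1 : ℕ) : ℤ)) ^ 2 = (k + 1) ^ 2 := by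
      have : ((k.natAbs : ℤ)) = k := by omega
      push_cast [this]
      ring
    have hrec := op_recZ n (k.natAbs + 1)
    rw [hsq] at hrec
    rw [habs, ← hrec]
    ring

lemma main_pos (n : ℕ) (m k : ℤ) (h0 : 0 < m) (hmk : m ≤ k) :
    (-1 : ℤ) ^ m.natAbs * ∑ j ∈ Finset.Icc m k, (-1 : ℤ) ^ j.natAbs * pbarZ ((n : ℤ) - j ^ 2) =
      op21 n m.natAbs + (-1 : ℤ) ^ (m + k).natAbs * op21 n (k.natAbs + 1) := by
  rw [telescope n m k h0 hmk, neg_one_pow_natAbs_add]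
  have h1 : (-1 : ℤ) ^ m.natAbs * (-1 : ℤ) ^ m.natAbs = 1 := by
    rw [← pow_add]
    exact Even.neg_one_pow ⟨m.natAbs, by omega⟩
  linear_combination (op21 n m.natAbs : ℤ) * h1

end Aux

theorem truncated_sum_mk_pos (m k : ℤ) (n : ℕ) (hmk : m ≤ k) (h : 0 < m * k) (hn : 1 ≤ n) :
    (-1 : ℤ) ^ (min |m| k).natAbs *
        ∑ j ∈ Finset.Icc m k, (-1 : ℤ) ^ j.natAbs * pbarZ ((n : ℤ) - j ^ 2) =
      op21 n (min m.natAbs k.natAbs) +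
        (-1 : ℤ) ^ (m + k).natAbs * op21 n (max m.natAbs k.natAbs + 1) := by
  have hcases : (0 < m ∧ 0 < k) ∨ (m < 0 ∧ k < 0) := by
    rcases lt_trichotomy m 0 with hm | hm | hm
    · rcases lt_trichotomy k 0 with hk | hk | hk
      · exact Or.inr ⟨hm, hk⟩
      · simp [hk] at h
      · nlinarith
    · simp [hm] at h
    · exact Or.inl ⟨hm, by omega⟩
  rcases hcases with ⟨hm, hk⟩ | ⟨hm, hk⟩
  · have h1 : (min |m| k).natAbs = m.natAbs := by
      rw [abs_of_pos hm]
      omega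
    have h2 : min m.natAbs k.natAbs = m.natAbs := by omega
    have h3 : max m.natAbs k.natAbs = k.natAbs := by omega
    rw [h1, h2, h3]
    exact Aux.main_pos n m k hm hmk
  · have h1 : (min |m| k).natAbs = (-k).natAbs := by
      rw [abs_of_neg hm]
      omega
    have h2 : min m.natAbs k.natAbs = (-k).natAbs := by omega
    have h3 : max m.natAbs k.natAbs = (-m).natAbs := by omega
    have hre : ∑ j ∈ Finset.Icc m k, (-1 : ℤ) ^ j.natAbs * pbarZ ((n : ℤ) - j ^ 2) =
        ∑ j ∈ Finset.Icc (-k) (-m), (-1 : ℤ) ^ j.natAbs * pbarZ ((n : ℤ) - j ^ 2) := by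
      rw [show Finset.Icc m k = (Finset.Icc (-k) (-m)).image (fun x => -x) from by
        ext x
        simp only [Finset.mem_Icc, Finset.mem_image]
        constructor
        · intro hx
          exact ⟨-x, by omega, by ring⟩
        · rintro ⟨a, ha, rfl⟩
          omega]
      rw [Finset.sum_image (by intro a _ b _ hab; exact neg_inj.mp hab)]
      refine Finset.sum_congr rfl fun j _ => ?_
      rw [Int.natAbs_neg, neg_pow, neg_pow]
      ring_nf
    have h4 : (m + k).natAbs = (-k + -m).natAbs := by omega
    rw [h1, h2, h3, hre, h4]
    exact Aux.main_pos n (-k) (-m) (by omega) (by omega)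
end

section
/- For all integers n, k ≥ 1, (−1)^k ( p̄(n) + 2 ∑_{j=1}^{k} (−1)^j p̄(n − j²) ) = 2 · op_{2,1}(n, k+1). -/
namespace TG
open PowerSeries Finset

abbrev R := PowerSeries ℤ

noncomputable def om (e : ℕ) : R := 1 - (X:R)^e
noncomputable def opl (e : ℕ) : R := 1 + (X:R)^e

/-- `f` agrees with `1` in coefficients `≤ m`. -/
def IsLow (m : ℕ) (h : R) : Prop := ∀ r ≤ m, coeff r h = coeff r (1:R)

lemma isLow_one (m : ℕ) : IsLow m (1:R) := fun _ _ => rfl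

lemma isLow_om {m e : ℕ} (h : m < e) : IsLow m (om e) := by
  intro r hr
  simp only [om, map_sub, coeff_one, PowerSeries.coeff_X_pow]
  have : r ≠ e := by omega
  simp [this]

lemma isLow_opl {m e : ℕ} (h : m < e) : IsLow m (opl e) := by
  intro r hr
  simp only [opl, map_add, coeff_one, PowerSeries.coeff_X_pow]
  have : r ≠ e := by omega
  simp [this]

lemma coeff_mul_congr {m : ℕ} {f f' g g' : R} (hf : ∀ r ≤ m, coeff r f = coeff r f')
    (hg : ∀ r ≤ m, coeff r g = coeff r g') :
    coeff m (f * g) = coeff m (f' * g') := by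
  rw [PowerSeries.coeff_mul, PowerSeries.coeff_mul]
  refine Finset.sum_congr rfl ?_
  intro p hp
  rw [Finset.HasAntidiagonal.mem_antidiagonal] at hp
  rw [hf p.1 (by omega), hg p.2 (by omega)]

lemma isLow_mul {m : ℕ} {f g : R} (hf : IsLow m f) (hg : IsLow m g) : IsLow m (f * g) := by
  intro r hr
  have h1 : coeff r (f * g) = coeff r ((1:R) * 1) :=
    coeff_mul_congr (fun s hs => hf s (le_trans hs hr)) (fun s hs => hg s (le_trans hs hr))
  rw [h1, one_mul]

lemma isLow_prod {m : ℕ} {ι : Type*} (s : Finset ι) (g : ι → R)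
    (h : ∀ i ∈ s, IsLow m (g i)) : IsLow m (∏ i ∈ s, g i) := by
  classical
  induction s using Finset.induction_on with
  | empty => simpa using isLow_one m
  | insert a s' hx ih =>
    rw [Finset.prod_insert hx]
    exact isLow_mul (h a (mem_insert_self a s')) (ih fun i hi => h i (mem_insert_of_mem hi))

lemma coeff_mul_isLow {m : ℕ} {f h : R} (hh : IsLow m h) (r : ℕ) (hr : r ≤ m) :
    coeff r (f * h) = coeff r f := by
  have := coeff_mul_congr (m := r) (f := f) (f' := f) (g := h) (g' := 1)
    (fun _ _ => rfl) (fun s hs => hh s (le_trans hs hr))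
  rw [this, mul_one]

lemma coeff_isLow {m : ℕ} {h : R} (hh : IsLow m h) (r : ℕ) (hr : r ≤ m) :
    coeff r h = if r = 0 then 1 else 0 := by
  rw [hh r hr, PowerSeries.coeff_one]

/-- Products for the descent. -/
noncomputable def Oc (c n : ℕ) : R := ∏ i ∈ range n, om (c*(2*i+1))
noncomputable def Qc (c N : ℕ) : R := ∏ i ∈ range N, opl (c*(i+1))
noncomputable def Fc (c n : ℕ) : R := Oc c n * Qc c (2*n)

lemma Qc_split (c u : ℕ) :
    Qc c (2*u) = (∏ i ∈ range u, opl (c*(2*i+1))) * Qc (2*c) u := by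
  induction u with
  | zero => simp [Qc]
  | succ v ih =>
    have h1 : Qc c (2*(v+1)) = Qc c (2*v) * (opl (c*(2*v+1)) * opl (c*(2*v+2))) := by
      have h2 : 2*(v+1) = (2*v)+1+1 := by ring
      rw [Qc, h2, Finset.prod_range_succ, Finset.prod_range_succ, ← Qc]
      have e : 2*v+1+1 = 2*v+2 := by ring
      rw [e]; ring
    have h3 : Qc (2*c) (v+1) = Qc (2*c) v * opl (2*c*(v+1)) := by
      rw [Qc, Finset.prod_range_succ, ← Qc]
    rw [h1, ih, Finset.prod_range_succ, h3]
    have e2 : c*(2*v+2) = 2*c*(v+1) := by ring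
    rw [e2]; ring

lemma om_mul_opl (e : ℕ) : om e * opl e = om (2*e) := by
  simp only [om, opl]
  have h : (X:R)^e * (X:R)^e = (X:R)^(2*e) := by rw [← pow_add]; congr 1; ring
  have : (1 - (X:R)^e) * (1 + (X:R)^e) = 1 - (X:R)^e * (X:R)^e := by ring
  rw [this, h]

lemma Oc_split (c u : ℕ) :
    Oc c (2*u) = Oc c u * ∏ i ∈ Ico u (2*u), om (c*(2*i+1)) := by
  rw [Oc, Oc, ← Finset.prod_range_mul_prod_Ico _ (by omega : u ≤ 2*u)]

lemma Fc_step (c u : ℕ) :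
    Fc c (2*u) = Fc (2*c) u * ∏ i ∈ Ico u (2*u), om (2*c*(2*i+1)) := by
  rw [Fc, Qc_split c (2*u), ← mul_assoc]
  have h1 : Oc c (2*u) * (∏ i ∈ range (2*u), opl (c*(2*i+1)))
      = ∏ i ∈ range (2*u), om (2*c*(2*i+1)) := by
    rw [Oc, ← Finset.prod_mul_distrib]
    refine Finset.prod_congr rfl ?_
    intro i _
    rw [om_mul_opl]
    congr 1
    ring
  rw [h1]
  rw [← Finset.prod_range_mul_prod_Ico (fun i => om (2*c*(2*i+1))) (by omega : u ≤ 2*u)]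
  rw [Fc, Oc]
  ring

lemma Fc_succ (c n : ℕ) :
    Fc c (n+1) = Fc c n * (om (c*(2*n+1)) * (opl (c*(2*n+1)) * opl (c*(2*n+2)))) := by
  rw [Fc, Fc, Oc, Oc, Finset.prod_range_succ, Qc, Qc]
  have h2 : 2*(n+1) = (2*n) + 1 + 1 := by ring
  rw [h2, Finset.prod_range_succ, Finset.prod_range_succ]
  have e1 : c * (2*n+1+1) = c*(2*n+2) := by ring
  rw [e1]
  ring

lemma coeff_Fc_stable {m c : ℕ} (hc : 1 ≤ c) :
    ∀ n n', n ≤ n' → m ≤ c*n → coeff m (Fc c n) = coeff m (Fc c n') := by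
  intro n n' hnn' hm
  induction n' with
  | zero =>
    have : n = 0 := by omega
    subst this; rfl
  | succ v ih =>
    rcases Nat.lt_or_ge v n with h | h
    · have : n = v + 1 := by omega
      subst this; rfl
    · have hv : m ≤ c * v := le_trans hm (by exact Nat.mul_le_mul_left c h)
      rw [ih h, Fc_succ]
      rw [coeff_mul_isLow _ m le_rfl]
      have h1 : m < c*(2*v+1) := by nlinarith
      have h2 : m < c*(2*v+2) := by nlinarith
      exact isLow_mul (isLow_om h1) (isLow_mul (isLow_opl h1) (isLow_opl h2))

lemma coeff_Fc_aux : ∀ t c n m, 1 ≤ c → m ≤ c * n → m < 2^t * c →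
    coeff m (Fc c n) = if m = 0 then 1 else 0 := by
  intro t
  induction t with
  | zero =>
    intro c n m hc hm hlt
    simp only [pow_zero, one_mul] at hlt
    refine coeff_isLow ?_ m le_rfl
    refine isLow_mul (isLow_prod _ _ ?_) (isLow_prod _ _ ?_) <;> intro i _hi
    · exact isLow_om (by nlinarith)
    · exact isLow_opl (by nlinarith)
  | succ t ih =>
    intro c n m hc hm hlt
    rcases Nat.lt_or_ge m c with h | h
    · refine coeff_isLow ?_ m le_rfl
      refine isLow_mul (isLow_prod _ _ ?_) (isLow_prod _ _ ?_) <;> intro i _hi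
      · exact isLow_om (by nlinarith)
      · exact isLow_opl (by nlinarith)
    · -- climb to 2n then descend scale
      have hn1 : 1 ≤ n := by nlinarith
      have step1 : coeff m (Fc c n) = coeff m (Fc c (2*n)) :=
        coeff_Fc_stable hc n (2*n) (by omega) hm
      rw [step1, Fc_step]
      rw [coeff_mul_isLow ?_ m le_rfl]
      · refine ih (2*c) n m (by omega) (by nlinarith) (by
          have h9 : 2^(t+1) * c = 2^t * (2*c) := by ring
          omega)
      · refine isLow_prod _ _ ?_
        intro i hi
        rw [Finset.mem_Ico] at hi
        refine isLow_om ?_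
        nlinarith [hi.1]

lemma coeff_Fc {m c n : ℕ} (hc : 1 ≤ c) (hm : m ≤ c * n) :
    coeff m (Fc c n) = if m = 0 then 1 else 0 := by
  obtain ⟨t, ht⟩ : ∃ t, m < 2^t := ⟨m, Nat.lt_two_pow_self⟩
  exact coeff_Fc_aux t c n m hc hm (by nlinarith [Nat.one_le_two_pow (n := t)])


noncomputable def gb : ℕ → ℕ → R
  | _, 0 => 1
  | 0, _+1 => 0
  | (M+1), (r+1) => gb M r + (X:R)^(2*(r+1)) * gb M (r+1)

lemma gb_zero_right (M : ℕ) : gb M 0 = 1 := by cases M <;> rfl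

lemma gb_succ_succ (M r : ℕ) : gb (M+1) (r+1) = gb M r + (X:R)^(2*(r+1)) * gb M (r+1) := rfl

lemma gb_eq_zero : ∀ M r, M < r → gb M r = 0 := by
  intro M
  induction M with
  | zero => intro r hr; match r, hr with | (s+1), _ => rfl
  | succ M ih =>
    intro r hr
    match r, hr with
    | (s+1), hr =>
      rw [gb_succ_succ, ih s (by omega), ih (s+1) (by omega)]
      ring

lemma gb_diag : ∀ M, gb M M = 1 := by
  intro M
  induction M with
  | zero => rfl
  | succ M ih => rw [gb_succ_succ, ih, gb_eq_zero M (M+1) (by omega)]; ring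

noncomputable def Ar (r : ℕ) : R := ∏ i ∈ range r, om (2*(i+1))
noncomputable def Br (M r : ℕ) : R := ∏ i ∈ Ico (M-r) M, om (2*(i+1))

lemma Br_zero (M : ℕ) : Br M 0 = 1 := by simp [Br]

lemma Br_top (M r : ℕ) (h : r ≤ M) : Br (M+1) (r+1) = Br M r * om (2*(M+1)) := by
  rw [Br, Br]
  have h1 : (M+1) - (r+1) = M - r := by omega
  rw [h1, Finset.prod_Ico_succ_top (by omega : M - r ≤ M)]

lemma Br_succ (M s : ℕ) (h : s < M) : Br M (s+1) = om (2*(M-s)) * Br M s := by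
  rw [Br, Br, Finset.prod_eq_prod_Ico_succ_bot (by omega : M - (s+1) < M)]
  have h1 : M - (s+1) + 1 = M - s := by omega
  rw [h1]

lemma Xpow_mul_Xpow (a b : ℕ) : (X:R)^a * (X:R)^b = (X:R)^(a+b) := (pow_add _ _ _).symm

lemma gbProd : ∀ M r, r ≤ M → gb M r * Ar r = Br M r := by
  intro M
  induction M with
  | zero =>
    intro r hr
    have : r = 0 := by omega
    subst this
    simp [gb_zero_right, Ar, Br]
  | succ M ih =>
    intro r hr
    match r with
    | 0 => simp [gb_zero_right, Ar, Br_zero]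
    | (s+1) =>
      have hs : s ≤ M := by omega
      rw [gb_succ_succ]
      have hA : Ar (s+1) = Ar s * om (2*(s+1)) := by
        simp only [Ar]; exact Finset.prod_range_succ _ _
      rcases Nat.lt_or_ge s M with hlt | hge
      · -- s < M
        have e1 : (gb M s + (X:R)^(2*(s+1)) * gb M (s+1)) * Ar (s+1)
            = (gb M s * Ar s) * om (2*(s+1)) + (X:R)^(2*(s+1)) * (gb M (s+1) * Ar (s+1)) := by
          rw [hA]; ring
        rw [e1, ih s hs, ih (s+1) (by omega), Br_succ M s hlt, Br_top M s hs]
        have e2 : (X:R)^(2*(s+1)) * om (2*(M-s)) = (X:R)^(2*(s+1)) - (X:R)^(2*(M+1)) := by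
          rw [om]
          rw [mul_sub, mul_one, Xpow_mul_Xpow]
          congr 2
          omega
        calc Br M s * om (2*(s+1)) + (X:R)^(2*(s+1)) * (om (2*(M-s)) * Br M s)
            = Br M s * (om (2*(s+1)) + (X:R)^(2*(s+1)) * om (2*(M-s))) := by ring
          _ = Br M s * om (2*(M+1)) := by
              congr 1
              rw [e2, om, om]
              ring
      · -- s = M
        have hsM : s = M := by omega
        subst hsM
        rw [gb_eq_zero s (s+1) (by omega)]
        have e1 : (gb s s + (X:R)^(2*(s+1)) * 0) * Ar (s+1) = (gb s s * Ar s) * om (2*(s+1)) := by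
          rw [hA]; ring
        rw [e1, ih s le_rfl, Br_top s s le_rfl]

lemma Ar_ne_zero (r : ℕ) : Ar r ≠ 0 := by
  intro h
  have h1 : constantCoeff (Ar r) = 1 := by
    simp only [Ar, map_prod]
    rw [Finset.prod_eq_one]
    intro i _
    simp only [om, map_sub, map_pow, map_one, PowerSeries.constantCoeff_X]
    rw [zero_pow (by omega : 2*(i+1) ≠ 0)]
    ring
  rw [h] at h1
  simp at h1

lemma gb_P2 (M r : ℕ) (h : r ≤ M) :
    gb (M+1) (r+1) = (X:R)^(2*(M-r)) * gb M r + gb M (r+1) := by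
  have hA : Ar (r+1) ≠ 0 := Ar_ne_zero (r+1)
  apply mul_right_cancel₀ hA
  rw [gbProd (M+1) (r+1) (by omega)]
  rcases Nat.lt_or_ge r M with hlt | hge
  · have hA2 : Ar (r+1) = Ar r * om (2*(r+1)) := by
      simp only [Ar]; exact Finset.prod_range_succ _ _
    have e1 : ((X:R)^(2*(M-r)) * gb M r + gb M (r+1)) * Ar (r+1)
        = (X:R)^(2*(M-r)) * ((gb M r * Ar r) * om (2*(r+1))) + gb M (r+1) * Ar (r+1) := by
      rw [hA2]
      ring
    rw [e1, gbProd M r (by omega), gbProd M (r+1) (by omega), Br_top M r h,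
      Br_succ M r hlt]
    symm
    have e2 : (X:R)^(2*(M-r)) * om (2*(r+1)) = (X:R)^(2*(M-r)) - (X:R)^(2*(M+1)) := by
      rw [om, mul_sub, mul_one, Xpow_mul_Xpow]
      congr 2
      omega
    calc (X:R)^(2*(M-r)) * (Br M r * om (2*(r+1))) + om (2*(M-r)) * Br M r
        = Br M r * ((X:R)^(2*(M-r)) * om (2*(r+1)) + om (2*(M-r))) := by ring
      _ = Br M r * om (2*(M+1)) := by
          congr 1
          rw [e2, om, om]
          ring
  · have hrM : r = M := by omega
    subst hrM
    rw [gb_eq_zero r (r+1) (by omega), Br_top r r le_rfl]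
    have : r - r = 0 := by omega
    rw [this, pow_zero, one_mul]
    have hA2 : Ar (r+1) = Ar r * om (2*(r+1)) := by
      simp only [Ar]; exact Finset.prod_range_succ _ _
    have e1 : (gb r r + 0) * Ar (r+1) = (gb r r * Ar r) * om (2*(r+1)) := by
      rw [hA2]; ring
    rw [e1, gbProd r r le_rfl]

lemma gb_one_succ (M : ℕ) : gb (M+1) 1 = (X:R)^(2*M) + gb M 1 := by
  have := gb_P2 M 0 (by omega)
  rw [this, gb_zero_right]
  have : M - 0 = M := by omega
  rw [this, mul_one]

lemma gb_one_rel : ∀ M, gb M 1 + (X:R)^(2*M) = 1 + (X:R)^2 * gb M 1 := by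
  intro M
  induction M with
  | zero => simp [gb]
  | succ M ih =>
    rw [gb_one_succ]
    have e : (X:R)^(2*(M+1)) = (X:R)^2 * (X:R)^(2*M) := by
      rw [Xpow_mul_Xpow]; congr 1; omega
    rw [e]
    calc (X:R)^(2*M) + gb M 1 + (X:R)^2 * (X:R)^(2*M)
        = (gb M 1 + (X:R)^(2*M)) + (X:R)^2 * (X:R)^(2*M) := by ring
      _ = (1 + (X:R)^2 * gb M 1) + (X:R)^2 * (X:R)^(2*M) := by rw [ih]
      _ = 1 + (X:R)^2 * ((X:R)^(2*M) + gb M 1) := by ring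


noncomputable def msgn (k : ℕ) : R := (-1)^k

lemma msgn_succ (k : ℕ) : msgn (k+1) = -msgn k := by simp [msgn, pow_succ]

lemma msgn_add_two (k : ℕ) : msgn (k+2) = msgn k := by
  rw [show k+2 = (k+1)+1 from rfl, msgn_succ, msgn_succ, neg_neg]

def Dn (j n : ℕ) : ℕ := (((j:ℤ) - n)^2).toNat

noncomputable def hterm (n j : ℕ) : R := msgn (j+n) * (X:R)^(Dn j n) * gb (2*n) j

noncomputable def Tn (n : ℕ) : R := ∑ j ∈ range (2*n+1), hterm n j

lemma hterm_gt {n j : ℕ} (h : 2*n < j) : hterm n j = 0 := by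
  rw [hterm, gb_eq_zero _ _ h, mul_zero]

lemma Dn_shift (i n : ℕ) : Dn (i+2) (n+1) = Dn (i+1) n := by
  unfold Dn; congr 1; push_cast; ring

lemma Dn_zero (n : ℕ) : Dn 0 n = n*n := by
  unfold Dn
  have h : (((0:ℕ):ℤ) - n)^2 = ((n*n : ℕ) : ℤ) := by push_cast; ring
  rw [h, Int.toNat_natCast]

lemma Dn_one_succ (n : ℕ) : Dn 1 (n+1) = n*n := by
  unfold Dn
  have h : (((1:ℕ):ℤ) - ((n+1:ℕ):ℤ))^2 = ((n*n : ℕ) : ℤ) := by push_cast; ring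
  rw [h, Int.toNat_natCast]

lemma Dexp1 (i n : ℕ) (hi : i ≤ 2*n) : Dn (i+2) (n+1) + 2*(2*n-i) = Dn i n + (2*n+1) := by
  have ha : (0:ℤ) ≤ (((i+2:ℕ):ℤ) - ((n+1:ℕ):ℤ))^2 := sq_nonneg _
  have hb : (0:ℤ) ≤ ((i:ℤ) - n)^2 := sq_nonneg _
  have key : (((i+2:ℕ):ℤ) - ((n+1:ℕ):ℤ))^2 + (2*(2*(n:ℤ) - i)) = ((i:ℤ) - n)^2 + (2*n+1) := by
    push_cast; ring
  unfold Dn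
  omega

lemma Dexp2 (i n : ℕ) : Dn (i+2) (n+1) + 2*(i+2) = Dn (i+2) n + (2*n+1) := by
  have ha : (0:ℤ) ≤ (((i+2:ℕ):ℤ) - ((n+1:ℕ):ℤ))^2 := sq_nonneg _
  have hb : (0:ℤ) ≤ (((i+2:ℕ):ℤ) - n)^2 := sq_nonneg _
  have key : (((i+2:ℕ):ℤ) - ((n+1:ℕ):ℤ))^2 + (2*(i+2)) = (((i+2:ℕ):ℤ) - n)^2 + (2*n+1) := by
    push_cast; ring
  unfold Dn
  omega

lemma Dn11 (n : ℕ) : Dn 1 n + (2*n+1) = n*n + 2 := by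
  have ha : (0:ℤ) ≤ (((1:ℕ):ℤ) - n)^2 := sq_nonneg _
  have key : (((1:ℕ):ℤ) - n)^2 + (2*n+1) = (n:ℤ)*n + 2 := by push_cast; ring
  unfold Dn
  omega

lemma Dn_zero_succ (n : ℕ) : Dn 0 (n+1) = n*n + (2*n+1) := by
  rw [Dn_zero]; ring

lemma gb_two_rel (n : ℕ) : gb (2*n+2) 1 = 1 + (X:R)^(4*n+2) + (X:R)^2 * gb (2*n) 1 := by
  have h1 : gb (2*n+2) 1 = (X:R)^(2*(2*n+1)) + gb (2*n+1) 1 := gb_one_succ (2*n+1)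
  have h2 : gb (2*n+1) 1 = (X:R)^(2*(2*n)) + gb (2*n) 1 := gb_one_succ (2*n)
  have h3 := gb_one_rel (2*n)
  rw [h1, h2]
  rw [show 2*(2*n+1) = 4*n+2 by ring, show 2*(2*n) = 4*n by ring] at *
  linear_combination h3

lemma gb_four (n i : ℕ) (hi : i ≤ 2*n) : gb (2*n+2) (i+2) =
    (X:R)^(2*(2*n-i)) * gb (2*n) i + (1 + (X:R)^(4*n+2)) * gb (2*n) (i+1)
      + (X:R)^(2*(i+2)) * gb (2*n) (i+2) := by
  have h0 : gb (2*n+2) (i+2) = gb (2*n+1) (i+1) + (X:R)^(2*(i+2)) * gb (2*n+1) (i+2) :=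
    gb_succ_succ (2*n+1) (i+1)
  have h1 : gb (2*n+1) (i+1) = (X:R)^(2*(2*n-i)) * gb (2*n) i + gb (2*n) (i+1) :=
    gb_P2 (2*n) i hi
  rcases Nat.lt_or_ge i (2*n) with hlt | hge
  · have h2 : gb (2*n+1) (i+2) = (X:R)^(2*(2*n-(i+1))) * gb (2*n) (i+1) + gb (2*n) (i+2) :=
      gb_P2 (2*n) (i+1) (by omega)
    rw [h0, h1, h2]
    have e : (X:R)^(2*(i+2)) * (X:R)^(2*(2*n-(i+1))) = (X:R)^(4*n+2) := by
      rw [Xpow_mul_Xpow]; congr 1; omega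
    calc (X:R)^(2*(2*n-i)) * gb (2*n) i + gb (2*n) (i+1) +
          (X:R)^(2*(i+2)) * ((X:R)^(2*(2*n-(i+1))) * gb (2*n) (i+1) + gb (2*n) (i+2))
        = (X:R)^(2*(2*n-i)) * gb (2*n) i
            + (1 + (X:R)^(2*(i+2)) * (X:R)^(2*(2*n-(i+1)))) * gb (2*n) (i+1)
            + (X:R)^(2*(i+2)) * gb (2*n) (i+2) := by ring
      _ = _ := by rw [e]
  · have hieq : i = 2*n := by omega
    subst hieq
    have z1 : gb (2*n) (2*n+1) = 0 := gb_eq_zero _ _ (by omega)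
    have z2 : gb (2*n) (2*n+2) = 0 := gb_eq_zero _ _ (by omega)
    have z3 : gb (2*n+1) (2*n+2) = 0 := gb_eq_zero _ _ (by omega)
    rw [h0, h1, z1, z2, z3]
    ring

lemma jtp_step (n : ℕ) : Tn (n+1) = (om (2*n+1))^2 * Tn n := by
  -- split the sum
  have hsplit : Tn (n+1)
      = (∑ i ∈ range (2*n+1), hterm (n+1) (i+2)) + hterm (n+1) 1 + hterm (n+1) 0 := by
    rw [Tn, show 2*(n+1)+1 = (2*n+2)+1 by ring, Finset.sum_range_succ',
      show 2*n+2 = (2*n+1)+1 by ring, Finset.sum_range_succ']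
  -- termwise expansion
  have hmain : ∀ i ∈ range (2*n+1), hterm (n+1) (i+2) =
      (-(X:R)^(2*n+1)) * hterm n i + ((1 + (X:R)^(4*n+2)) * hterm n (i+1))
        + (-(X:R)^(2*n+1)) * hterm n (i+2) := by
    intro i hi
    rw [mem_range] at hi
    have hi' : i ≤ 2*n := by omega
    rw [hterm, show 2*(n+1) = 2*n+2 by ring, gb_four n i hi']
    have s1 : msgn (i+2+(n+1)) = -msgn (i+n) := by
      rw [show i+2+(n+1) = ((i+n)+1)+2 by omega, msgn_add_two, msgn_succ]
    have s2 : msgn (i+2+(n+1)) = msgn ((i+1)+n) := by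
      rw [show i+2+(n+1) = ((i+1)+n)+2 by omega, msgn_add_two]
    have s3 : msgn (i+2+(n+1)) = -msgn ((i+2)+n) := by
      rw [show i+2+(n+1) = ((i+2)+n)+1 by omega, msgn_succ]
    have x1 : (X:R)^(Dn (i+2) (n+1)) * (X:R)^(2*(2*n-i))
        = (X:R)^(Dn i n) * (X:R)^(2*n+1) := by
      rw [Xpow_mul_Xpow, Xpow_mul_Xpow, Dexp1 i n hi']
    have x2 : (X:R)^(Dn (i+2) (n+1)) = (X:R)^(Dn (i+1) n) := by rw [Dn_shift]
    have x3 : (X:R)^(Dn (i+2) (n+1)) * (X:R)^(2*(i+2))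
        = (X:R)^(Dn (i+2) n) * (X:R)^(2*n+1) := by
      rw [Xpow_mul_Xpow, Xpow_mul_Xpow, Dexp2 i n]
    rw [hterm, hterm, hterm]
    calc msgn (i+2+(n+1)) * (X:R)^(Dn (i+2) (n+1)) *
          ((X:R)^(2*(2*n-i)) * gb (2*n) i + (1 + (X:R)^(4*n+2)) * gb (2*n) (i+1)
            + (X:R)^(2*(i+2)) * gb (2*n) (i+2))
        = (msgn (i+2+(n+1)) * ((X:R)^(Dn (i+2) (n+1)) * (X:R)^(2*(2*n-i))) * gb (2*n) i)
          + ((1 + (X:R)^(4*n+2)) * (msgn (i+2+(n+1)) * (X:R)^(Dn (i+2) (n+1)) * gb (2*n) (i+1)))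
          + (msgn (i+2+(n+1)) * ((X:R)^(Dn (i+2) (n+1)) * (X:R)^(2*(i+2))) * gb (2*n) (i+2)) := by
          ring
      _ = _ := by
          have m2 : msgn (i+2+n) = msgn (i+n) := by
            rw [show i+2+n = (i+n)+2 by omega, msgn_add_two]
          have m3 : msgn (i+1+n) = -msgn (i+n) := by
            rw [show i+1+n = (i+n)+1 by omega, msgn_succ]
          rw [x1, x3, x2, s3, m2, m3]
          ring
  have hsum : ∑ i ∈ range (2*n+1), hterm (n+1) (i+2)
      = (-(X:R)^(2*n+1)) * Tn n
        + (1 + (X:R)^(4*n+2)) * (∑ i ∈ range (2*n+1), hterm n (i+1))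
        + (-(X:R)^(2*n+1)) * (∑ i ∈ range (2*n+1), hterm n (i+2)) := by
    rw [Finset.sum_congr rfl hmain, Finset.sum_add_distrib, Finset.sum_add_distrib,
      ← Finset.mul_sum, ← Finset.mul_sum, ← Finset.mul_sum, Tn]
  -- the shifted sums
  have e1 : ∑ i ∈ range (2*n+2), hterm n i = (∑ i ∈ range (2*n+1), hterm n (i+1)) + hterm n 0 := by
    rw [show 2*n+2 = (2*n+1)+1 by ring, Finset.sum_range_succ']
  have e2 : ∑ i ∈ range (2*n+2), hterm n i = Tn n := by
    rw [show 2*n+2 = (2*n+1)+1 by ring, Finset.sum_range_succ, ← Tn,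
      hterm_gt (by omega : 2*n < 2*n+1), add_zero]
  have e3 : ∑ i ∈ range (2*n+2), hterm n (i+1)
      = (∑ i ∈ range (2*n+1), hterm n (i+2)) + hterm n 1 := by
    rw [show 2*n+2 = (2*n+1)+1 by ring, Finset.sum_range_succ']
  have e4 : ∑ i ∈ range (2*n+2), hterm n (i+1) = (∑ i ∈ range (2*n+1), hterm n (i+1)) := by
    rw [show 2*n+2 = (2*n+1)+1 by ring, Finset.sum_range_succ,
      hterm_gt (by omega : 2*n < 2*n+1+1), add_zero]
  have hS1 : ∑ i ∈ range (2*n+1), hterm n (i+1) = Tn n - hterm n 0 := by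
    linear_combination e2 - e1
  have hS2 : ∑ i ∈ range (2*n+1), hterm n (i+2) = Tn n - hterm n 0 - hterm n 1 := by
    linear_combination e2 - e1 + e4 - e3
  -- boundary values
  have b0 : hterm (n+1) 0 = -(msgn n * (X:R)^(n*n) * (X:R)^(2*n+1)) := by
    rw [hterm, gb_zero_right, Dn_zero_succ, show (0:ℕ)+(n+1) = n+1 by omega, msgn_succ,
      ← Xpow_mul_Xpow]
    ring
  have b1 : hterm (n+1) 1 = msgn n * (X:R)^(n*n) * gb (2*(n+1)) 1 := by
    rw [hterm, Dn_one_succ, show (1:ℕ)+(n+1) = n+2 by omega, msgn_add_two]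
  have bh0 : hterm n 0 = msgn n * (X:R)^(n*n) := by
    rw [hterm, gb_zero_right, Dn_zero, show (0:ℕ)+n = n by omega, mul_one]
  have bh1 : (X:R)^(2*n+1) * hterm n 1
      = -(msgn n * ((X:R)^(n*n) * (X:R)^2) * gb (2*n) 1) := by
    rw [hterm, show (1:ℕ)+n = n+1 by omega, msgn_succ]
    have : (X:R)^(2*n+1) * (X:R)^(Dn 1 n) = (X:R)^(n*n) * (X:R)^2 := by
      rw [Xpow_mul_Xpow, Xpow_mul_Xpow]
      congr 1
      have := Dn11 n
      omega
    calc (X:R)^(2*n+1) * (-msgn n * (X:R)^(Dn 1 n) * gb (2*n) 1)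
        = -(msgn n * ((X:R)^(2*n+1) * (X:R)^(Dn 1 n)) * gb (2*n) 1) := by ring
      _ = _ := by rw [this]
  have hgb2 : gb (2*(n+1)) 1 = 1 + (X:R)^(4*n+2) + (X:R)^2 * gb (2*n) 1 := by
    rw [show 2*(n+1) = 2*n+2 by ring]; exact gb_two_rel n
  have hxx : (X:R)^(2*n+1) * (X:R)^(2*n+1) = (X:R)^(4*n+2) := by
    rw [Xpow_mul_Xpow]; congr 1; omega
  rw [hsplit, hsum, hS1, hS2, b0, b1, bh0, om]
  linear_combination (msgn n * (X:R)^(n*n)) * hgb2 + bh1 + (Tn n - msgn n * (X:R)^(n*n)) * hxx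

theorem jtp : ∀ n, Tn n = ∏ i ∈ range n, (om (2*i+1))^2 := by
  intro n
  induction n with
  | zero =>
    rw [Tn]
    simp only [Nat.mul_zero, Nat.zero_add, Finset.range_one, Finset.sum_singleton,
      Finset.range_zero, Finset.prod_empty]
    rw [hterm, Dn_zero]
    simp [msgn, gb_zero_right]
  | succ n ih =>
    rw [jtp_step n, ih, Finset.prod_range_succ]
    ring

/-! ### Coefficient extraction -/

lemma coeff_msgn_mul (k r : ℕ) (f : R) :
    coeff r (msgn k * f) = (-1)^k * coeff r f := by
  have h : msgn k = (PowerSeries.C) ((-1)^k) := by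
    rw [msgn, map_pow, map_neg, map_one]
  rw [h, PowerSeries.coeff_C_mul]

lemma coeff_Xpow_mul (d r : ℕ) (f : R) :
    coeff r ((X:R)^d * f) = if d ≤ r then coeff (r-d) f else 0 := by
  rw [mul_comm, PowerSeries.coeff_mul_X_pow']

lemma neg_one_pow_congr {a b : ℕ} (h : a % 2 = b % 2) : ((-1:ℤ))^a = (-1)^b := by
  conv_lhs => rw [← Nat.div_add_mod a 2]
  conv_rhs => rw [← Nat.div_add_mod b 2]
  rw [h, pow_add, pow_add, pow_mul, pow_mul]
  norm_num

lemma prod_om_split (n : ℕ) :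
    ∏ i ∈ range (2*n), om (i+1)
      = (∏ i ∈ range n, om (2*i+1)) * ∏ i ∈ range n, om (2*(i+1)) := by
  induction n with
  | zero => simp
  | succ v ih =>
    rw [show 2*(v+1) = (2*v)+1+1 by ring, Finset.prod_range_succ, Finset.prod_range_succ, ih,
      Finset.prod_range_succ, Finset.prod_range_succ]
    rw [show 2*v+1+1 = 2*(v+1) by ring]
    ring

lemma prod_opl_split (n : ℕ) :
    ∏ i ∈ range (2*n), opl (i+1)
      = (∏ i ∈ range n, opl (2*i+1)) * ∏ i ∈ range n, opl (2*(i+1)) := by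
  induction n with
  | zero => simp
  | succ v ih =>
    rw [show 2*(v+1) = (2*v)+1+1 by ring, Finset.prod_range_succ, Finset.prod_range_succ, ih,
      Finset.prod_range_succ, Finset.prod_range_succ]
    rw [show 2*v+1+1 = 2*(v+1) by ring]
    ring

lemma Fc_one (n : ℕ) :
    Fc 1 n = (∏ i ∈ range n, om (2*i+1)) * ∏ i ∈ range (2*n), opl (i+1) := by
  rw [Fc, Oc, Qc]
  congr 1
  · exact Finset.prod_congr rfl (fun i _ => by rw [one_mul])
  · exact Finset.prod_congr rfl (fun i _ => by rw [one_mul])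

lemma sum_Icc_sym (g : ℕ → ℤ) (n : ℕ) :
    ∀ s, s ≤ n → ∑ j ∈ Icc (n-s) (n+s), g j = g n + ∑ t ∈ Icc 1 s, (g (n-t) + g (n+t)) := by
  intro s
  induction s with
  | zero => intro _; simp
  | succ s ih =>
    intro hs
    have hI : Icc (n-(s+1)) (n+(s+1))
        = insert (n-(s+1)) (insert (n+(s+1)) (Icc (n-s) (n+s))) := by
      ext x
      simp only [mem_Icc, mem_insert]
      omega
    have h1 : (n+(s+1)) ∉ Icc (n-s) (n+s) := by simp only [mem_Icc]; omega
    have h2 : (n-(s+1)) ∉ insert (n+(s+1)) (Icc (n-s) (n+s)) := by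
      simp only [mem_Icc, mem_insert]
      omega
    have hI2 : Icc 1 (s+1) = insert (s+1) (Icc 1 s) := by
      ext x
      simp only [mem_Icc, mem_insert]
      omega
    have h3 : (s+1) ∉ Icc 1 s := by simp only [mem_Icc]; omega
    rw [hI, Finset.sum_insert h2, Finset.sum_insert h1, ih (by omega), hI2,
      Finset.sum_insert h3]
    ring

lemma Dn_self (n : ℕ) : Dn n n = 0 := by
  unfold Dn
  simp

lemma Dn_add (n t : ℕ) : Dn (n+t) n = t*t := by
  unfold Dn
  have h : (((n+t:ℕ):ℤ) - n)^2 = ((t*t : ℕ) : ℤ) := by push_cast; ring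
  rw [h, Int.toNat_natCast]

lemma Dn_sub (n t : ℕ) (h : t ≤ n) : Dn (n-t) n = t*t := by
  unfold Dn
  have h2 : (((n-t:ℕ):ℤ) - n)^2 = ((t*t : ℕ) : ℤ) := by
    push_cast [h]
    ring
  rw [h2, Int.toNat_natCast]

/-- `gb (2n) j * Ar n` looks like `1` in low degrees. -/
lemma gbAr_low (n j : ℕ) (hj : j ≤ 2*n) (r : ℕ) (hr1 : r ≤ 2*j+1) (hr2 : r ≤ 2*(2*n-j)+1) :
    coeff r (gb (2*n) j * Ar n) = coeff r (1:R) := by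
  rcases le_or_gt j n with hle | hlt
  · have hsplit : Ar n = Ar j * ∏ i ∈ Ico j n, om (2*(i+1)) := by
      simp only [Ar]
      exact (Finset.prod_range_mul_prod_Ico _ hle).symm
    rw [hsplit, ← mul_assoc, gbProd (2*n) j hj]
    refine isLow_mul (m := r) ?_ ?_ r le_rfl
    · refine isLow_prod _ _ ?_
      intro i hi
      rw [mem_Ico] at hi
      exact isLow_om (by omega)
    · refine isLow_prod _ _ ?_
      intro i hi
      rw [mem_Ico] at hi
      exact isLow_om (by omega)
  · have htail : IsLow r (∏ i ∈ Ico n j, om (2*(i+1))) := by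
      refine isLow_prod _ _ ?_
      intro i hi
      rw [mem_Ico] at hi
      refine isLow_om ?_
      omega
    have h1 : coeff r (gb (2*n) j * Ar n)
        = coeff r ((gb (2*n) j * Ar n) * ∏ i ∈ Ico n j, om (2*(i+1))) :=
      (coeff_mul_isLow htail r le_rfl).symm
    have h2 : (gb (2*n) j * Ar n) * ∏ i ∈ Ico n j, om (2*(i+1)) = gb (2*n) j * Ar j := by
      rw [mul_assoc]
      congr 1
      simp only [Ar]
      exact Finset.prod_range_mul_prod_Ico _ (by omega)
    rw [h1, h2, gbProd (2*n) j hj]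
    refine isLow_prod _ _ ?_ r le_rfl
    intro i hi
    rw [mem_Ico] at hi
    exact isLow_om (by omega)


lemma cast_Dn (j n : ℕ) : ((Dn j n : ℕ) : ℤ) = ((j:ℤ) - n)^2 := by
  unfold Dn
  exact Int.toNat_of_nonneg (sq_nonneg _)

theorem alg_main (P : R)
    (hbridge : ∀ N r, r ≤ N →
      coeff r (P * ∏ i ∈ range N, om (i+1)) = coeff r (∏ i ∈ range N, opl (i+1)))
    (m : ℕ) :
    coeff m P + 2 * ∑ t ∈ Icc 1 (Nat.sqrt m), (-1)^t * coeff (m - t*t) P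
      = if m = 0 then 1 else 0 := by
  classical
  set n := m with hn
  -- Claim 1 : coeff m (Tn n * (Ar n * P)) = δ
  have claim1 : coeff m (Tn n * (Ar n * P)) = if m = 0 then 1 else 0 := by
    have hE : Tn n * (Ar n * P)
        = (∏ i ∈ range n, om (2*i+1)) * (P * ∏ i ∈ range (2*n), om (i+1)) := by
      rw [jtp n, prod_om_split n, Finset.prod_pow]
      simp only [Ar]
      ring
    rw [hE]
    have hrepl : coeff m ((∏ i ∈ range n, om (2*i+1)) * (P * ∏ i ∈ range (2*n), om (i+1)))
        = coeff m ((∏ i ∈ range n, om (2*i+1)) * (∏ i ∈ range (2*n), opl (i+1))) := by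
      rw [mul_comm ((∏ i ∈ range n, om (2*i+1))) _, mul_comm ((∏ i ∈ range n, om (2*i+1))) _]
      refine coeff_mul_congr ?_ (fun r _ => rfl)
      intro r hr
      exact hbridge (2*n) r (by omega)
    rw [hrepl, ← Fc_one]
    exact coeff_Fc (by omega) (by omega)
  -- Claim 2 : expansion
  have hterm_coeff : ∀ j ∈ range (2*n+1), coeff m (hterm n j * (Ar n * P))
      = (-1)^(j+n) * (if Dn j n ≤ m then coeff (m - Dn j n) P else 0) := by
    intro j hj
    rw [mem_range] at hj
    have e : hterm n j * (Ar n * P)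
        = msgn (j+n) * ((X:R)^(Dn j n) * (P * (gb (2*n) j * Ar n))) := by
      rw [hterm]; ring
    rw [e, coeff_msgn_mul, coeff_Xpow_mul]
    congr 1
    rcases le_or_gt (Dn j n) m with hD | hD
    · rw [if_pos hD, if_pos hD]
      have hb1 : m - Dn j n ≤ 2*j+1 := by
        have h1 : (m:ℤ) ≤ ((Dn j n : ℕ):ℤ) + 2*j+1 := by
          rw [cast_Dn]
          nlinarith [sq_nonneg ((j:ℤ) - n + 1)]
        omega
      have hb2 : m - Dn j n ≤ 2*(2*n-j)+1 := by
        have h1 : (m:ℤ) ≤ ((Dn j n : ℕ):ℤ) + 2*(2*(n:ℤ) - j) + 1 := by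
          rw [cast_Dn]
          nlinarith [sq_nonneg ((j:ℤ) - n - 1)]
        omega
      have hlow : IsLow (m - Dn j n) (gb (2*n) j * Ar n) := by
        intro r hr
        exact gbAr_low n j (by omega) r (by omega) (by omega)
      exact coeff_mul_isLow hlow _ le_rfl
    · rw [if_neg (by omega), if_neg (by omega)]
  have claim2 : coeff m (Tn n * (Ar n * P))
      = coeff m P + 2 * ∑ t ∈ Icc 1 (Nat.sqrt m), (-1)^t * coeff (m - t*t) P := by
    rw [Tn, Finset.sum_mul, map_sum]
    rw [Finset.sum_congr rfl hterm_coeff]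
    set s := Nat.sqrt m with hs
    have hsn : s ≤ n := le_trans (Nat.sqrt_le_self m) (by omega)
    have hss : s * s ≤ m := by
      have := Nat.sqrt_le' m
      simpa [pow_two] using this
    have hmlt : m < (s+1)*(s+1) := by
      have := Nat.lt_succ_sqrt' m
      simpa [pow_two, Nat.succ_eq_add_one] using this
    set f : ℕ → ℤ := fun j => (-1)^(j+n) * (if Dn j n ≤ m then coeff (m - Dn j n) P else 0)
      with hf
    have hrestrict : ∑ j ∈ range (2*n+1), f j = ∑ j ∈ Icc (n-s) (n+s), f j := by
      refine (Finset.sum_subset ?_ ?_).symm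
      · intro x hx
        rw [mem_Icc] at hx
        rw [mem_range]
        omega
      · intro x _ hx
        rw [mem_Icc] at hx
        have hDgt : m < Dn x n := by
          have h1 : ((s+1)*(s+1) : ℕ) ≤ Dn x n := by
            have h2 : (((s+1)*(s+1):ℕ):ℤ) ≤ ((Dn x n : ℕ):ℤ) := by
              rw [cast_Dn]
              push_cast
              rcases Nat.lt_or_ge x (n-s) with hc | hc
              · have hc' : (x:ℤ) ≤ (n:ℤ) - s - 1 := by omega
                nlinarith [mul_nonneg (by linarith : (0:ℤ) ≤ -(((x:ℤ)-n) - ((s:ℤ)+1)))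
                  (by linarith : (0:ℤ) ≤ -(((x:ℤ)-n) + ((s:ℤ)+1)))]
              · have hc2 : (n:ℤ) + s + 1 ≤ x := by omega
                nlinarith [mul_nonneg (by linarith : (0:ℤ) ≤ (((x:ℤ)-n) - ((s:ℤ)+1)))
                  (by linarith : (0:ℤ) ≤ (((x:ℤ)-n) + ((s:ℤ)+1)))]
            exact_mod_cast h2
          exact lt_of_lt_of_le hmlt h1
        rw [hf]
        simp only [if_neg (by omega : ¬ Dn x n ≤ m), mul_zero]
    rw [hrestrict, sum_Icc_sym f n s hsn]
    have hfn : f n = coeff m P := by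
      rw [hf]
      simp only [Dn_self]
      rw [if_pos (by omega)]
      rw [neg_one_pow_congr (by omega : (n+n) % 2 = 0 % 2)]
      simp
    have hft : ∀ t ∈ Icc 1 s, f (n-t) + f (n+t) = 2 * ((-1)^t * coeff (m - t*t) P) := by
      intro t ht
      rw [mem_Icc] at ht
      have htn : t ≤ n := by omega
      have htt : t * t ≤ m := le_trans (Nat.mul_le_mul ht.2 ht.2) hss
      rw [hf]
      simp only [Dn_sub n t htn, Dn_add n t]
      rw [if_pos htt, neg_one_pow_congr (by omega : ((n-t)+n) % 2 = t % 2),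
        neg_one_pow_congr (by omega : ((n+t)+n) % 2 = t % 2)]
      ring
    rw [Finset.sum_congr rfl hft, ← Finset.mul_sum, hfn]
  rw [← claim2, claim1]


theorem OP.ext {n : ℕ} {π π' : Overpartition n} (hc : π.count = π'.count)
    (ho : π.overParts = π'.overParts) : π = π' := by
  cases π; cases π'
  simp_all

def wt (f : ℕ →₀ ℕ) : ℕ := f.sum fun k m => k * m

lemma wt_add (f g : ℕ →₀ ℕ) : wt (f + g) = wt f + wt g :=
  Finsupp.sum_add_index' (by simp) (by intros; ring)

lemma wt_single (d c : ℕ) : wt (Finsupp.single d c) = d * c :=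
  Finsupp.sum_single_index (by simp)

lemma wt_term_le (f : ℕ →₀ ℕ) (p : ℕ) (hp : f p ≠ 0) : p * f p ≤ wt f := by
  rw [wt, Finsupp.sum]
  exact Finset.single_le_sum (f := fun k => k * f k) (fun i _ => Nat.zero_le _)
    (Finsupp.mem_support_iff.mpr hp)

variable {n : ℕ}

lemma parts_le (π : Overpartition n) {p : ℕ} (hp : π.count p ≠ 0) : p ≤ n := by
  have h1 := wt_term_le π.count p hp
  have h2 := π.weight
  have hc : 1 ≤ π.count p := Nat.one_le_iff_ne_zero.mpr hp
  have h3 : p ≤ p * π.count p := Nat.le_mul_of_pos_right p (by omega)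
  rw [wt] at h1
  omega

lemma count_le (π : Overpartition n) (p : ℕ) : π.count p ≤ n := by
  rcases Nat.eq_zero_or_pos (π.count p) with h | h
  · omega
  · have hp : π.count p ≠ 0 := by omega
    have h1 := wt_term_le π.count p hp
    have h2 := π.weight
    have hpz : p ≠ 0 := by
      intro h0
      rw [h0] at hp
      exact hp π.count_zero
    have h3 : π.count p ≤ p * π.count p := Nat.le_mul_of_pos_left _ (by omega)
    rw [wt] at h1
    omega

lemma over_le (π : Overpartition n) {p : ℕ} (hp : p ∈ π.overParts) : p ≤ n := by
  have h1 : p ≤ ∑ k ∈ π.overParts, k :=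
    Finset.single_le_sum (f := fun k => k) (fun i _ => Nat.zero_le _) hp
  have h2 := π.weight
  omega

instance : Finite (Overpartition n) := by
  let F : Overpartition n → (Fin (n+1) → Fin (n+1)) × Finset (Fin (n+1)) := fun π =>
    (fun p => ⟨π.count p.val, Nat.lt_succ_of_le (count_le π p.val)⟩,
      π.overParts.attachFin (fun m hm => Nat.lt_succ_of_le (over_le π hm)))
  apply Finite.of_injective F
  intro a b hab
  obtain ⟨h1, h2⟩ := Prod.mk.injEq .. ▸ hab
  apply OP.ext
  · ext p
    rcases Nat.lt_or_ge p (n+1) with hp | hp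
    · have := congrFun h1 ⟨p, hp⟩
      simpa using this
    · have ha : a.count p = 0 := by
        by_contra h
        have := parts_le a h
        omega
      have hb : b.count p = 0 := by
        by_contra h
        have := parts_le b h
        omega
      rw [ha, hb]
  · ext p
    constructor
    · intro hp
      have hlt : p < n + 1 := Nat.lt_succ_of_le (over_le a hp)
      have h3 : (⟨p, hlt⟩ : Fin (n+1)) ∈ a.overParts.attachFin
          (fun m hm => Nat.lt_succ_of_le (over_le a hm)) :=
        (Finset.mem_attachFin _).mpr hp
      rw [h2] at h3
      exact (Finset.mem_attachFin _).mp h3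
    · intro hp
      have hlt : p < n + 1 := Nat.lt_succ_of_le (over_le b hp)
      have h3 : (⟨p, hlt⟩ : Fin (n+1)) ∈ b.overParts.attachFin
          (fun m hm => Nat.lt_succ_of_le (over_le b hm)) :=
        (Finset.mem_attachFin _).mpr hp
      rw [← h2] at h3
      exact (Finset.mem_attachFin _).mp h3

/-- generic subtype splitting -/
def subtypeSplit {α : Type*} (P Q : α → Prop) [DecidablePred Q] :
    {x // P x} ≃ {x // P x ∧ Q x} ⊕ {x // P x ∧ ¬Q x} where
  toFun x := if h : Q x.val then Sum.inl ⟨x.val, ⟨x.2, h⟩⟩ else Sum.inr ⟨x.val, ⟨x.2, h⟩⟩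
  invFun y := y.elim (fun z => ⟨z.val, z.2.1⟩) (fun z => ⟨z.val, z.2.1⟩)
  left_inv x := by
    by_cases h : Q x.val <;> simp [h]
  right_inv y := by
    rcases y with z | z
    · simp [z.2.2]
    · simp [z.2.2]

lemma card_split {α : Type*} [Finite α] (P Q : α → Prop) :
    Nat.card {x // P x} = Nat.card {x // P x ∧ Q x} + Nat.card {x // P x ∧ ¬Q x} := by
  classical
  rw [Nat.card_congr (subtypeSplit P Q), Nat.card_sum]

/-- bound predicate -/
def Bnd (N : ℕ) {m : ℕ} (π : Overpartition m) : Prop :=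
  ∀ p, (π.count p ≠ 0 ∨ p ∈ π.overParts) → p ≤ N

noncomputable def bb (N m : ℕ) : ℕ := Nat.card {π : Overpartition m // Bnd N π}

lemma bb_eq_pbar {N m : ℕ} (h : m ≤ N) : bb N m = pbar m := by
  rw [bb, pbar]
  apply Nat.card_congr
  apply Equiv.subtypeUnivEquiv
  intro π p hp
  rcases hp with hp | hp
  · exact le_trans (parts_le π hp) h
  · exact le_trans (over_le π hp) h

lemma pbar_zero : pbar 0 = 1 := by
  have : ∀ π : Overpartition 0, π = ⟨0, ∅, rfl, Finset.notMem_empty 0, rfl⟩ := by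
    intro π
    apply OP.ext
    · ext p
      by_contra h
      have h2 : π.count p ≠ 0 := by simpa using h
      have := parts_le π h2
      have hz : p = 0 := by omega
      rw [hz] at h2
      exact h2 π.count_zero
    · ext p
      simp only [Finset.notMem_empty, iff_false]
      intro hp
      have := over_le π hp
      have hz : p = 0 := by omega
      rw [hz] at hp
      exact π.zero_not_over hp
  rw [pbar]
  have : Unique (Overpartition 0) := ⟨⟨_⟩, this⟩
  exact Nat.card_unique


section Rec

lemma single_le_count {m : ℕ} (π : Overpartition m) {d : ℕ} (hc : π.count d ≠ 0) :
    Finsupp.single d 1 ≤ π.count := by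
  rw [Finsupp.single_le_iff]
  omega

noncomputable def removeOne {m m' : ℕ} (π : Overpartition m) (d : ℕ) (hd0 : d ≠ 0)
    (hc : π.count d ≠ 0) (hm : m - d = m') (hdm : d ≤ m) : Overpartition m' where
  count := π.count - Finsupp.single d 1
  overParts := π.overParts
  count_zero := by
    rw [Finsupp.tsub_apply, π.count_zero]
    exact Nat.zero_sub _
  zero_not_over := π.zero_not_over
  weight := by
    show wt (π.count - Finsupp.single d 1) + _ = _
    have hcancel : (π.count - Finsupp.single d 1) + Finsupp.single d 1 = π.count :=
      tsub_add_cancel_of_le (single_le_count π hc)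
    have hw : wt (π.count - Finsupp.single d 1) + d * 1 = wt π.count := by
      rw [← wt_single d 1, ← wt_add, hcancel]
    have h2 : wt π.count + ∑ k ∈ π.overParts, k = m := π.weight
    omega

noncomputable def addOne {m m' : ℕ} (σ : Overpartition m') (d : ℕ) (hd0 : d ≠ 0)
    (hm : m' + d = m) : Overpartition m where
  count := σ.count + Finsupp.single d 1
  overParts := σ.overParts
  count_zero := by
    rw [Finsupp.add_apply, σ.count_zero, Finsupp.single_apply, if_neg (by omega : ¬ d = 0)]
    rfl
  zero_not_over := σ.zero_not_over
  weight := by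
    show wt (σ.count + Finsupp.single d 1) + _ = _
    rw [wt_add, wt_single]
    have h2 : wt σ.count + ∑ k ∈ σ.overParts, k = m' := σ.weight
    omega

noncomputable def equivX1 (N m : ℕ) (hd : N+1 ≤ m) :
    {π : Overpartition m // Bnd (N+1) π ∧ π.count (N+1) ≠ 0}
      ≃ {σ : Overpartition (m-(N+1)) // Bnd (N+1) σ} where
  toFun π := ⟨removeOne π.val (N+1) (by omega) π.2.2 rfl hd, by
    intro p hp
    rcases hp with hp | hp
    · have hp' : ((π.val.count - Finsupp.single (N+1) 1 : ℕ →₀ ℕ)) p ≠ 0 := hp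
      rw [Finsupp.tsub_apply] at hp'
      have hcp : π.val.count p ≠ 0 := by omega
      exact π.2.1 p (Or.inl hcp)
    · exact π.2.1 p (Or.inr hp)⟩
  invFun σ := ⟨addOne σ.val (N+1) (by omega) (by omega), by
    constructor
    · intro p hp
      rcases hp with hp | hp
      · have hp' : ((σ.val.count + Finsupp.single (N+1) 1 : ℕ →₀ ℕ)) p ≠ 0 := hp
        rw [Finsupp.add_apply] at hp'
        rcases Nat.eq_zero_or_pos (σ.val.count p) with h0 | h0
        · have hs : Finsupp.single (N+1) 1 p ≠ 0 := by omega
          have hs2 : p = N+1 := by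
            by_contra hcon
            rw [Finsupp.single_apply, if_neg (by omega)] at hs
            exact hs rfl
          omega
        · exact σ.2 p (Or.inl (by omega))
      · exact σ.2 p (Or.inr hp)
    · show ((σ.val.count + Finsupp.single (N+1) 1 : ℕ →₀ ℕ)) (N+1) ≠ 0
      rw [Finsupp.add_apply, Finsupp.single_apply, if_pos rfl]
      omega⟩
  left_inv π := by
    apply Subtype.ext
    apply OP.ext
    · show (π.val.count - Finsupp.single (N+1) 1) + Finsupp.single (N+1) 1 = π.val.count
      exact tsub_add_cancel_of_le (single_le_count π.val π.2.2)
    · rfl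
  right_inv σ := by
    apply Subtype.ext
    apply OP.ext
    · show (σ.val.count + Finsupp.single (N+1) 1) - Finsupp.single (N+1) 1 = σ.val.count
      exact add_tsub_cancel_right _ _
    · rfl

noncomputable def equivX2 (N m : ℕ) (hd : N+1 ≤ m) :
    {π : Overpartition m // (Bnd (N+1) π ∧ π.count (N+1) = 0) ∧ (N+1) ∈ π.overParts}
      ≃ {σ : Overpartition (m-(N+1)) // Bnd N σ} where
  toFun π := ⟨⟨π.val.count, π.val.overParts.erase (N+1), π.val.count_zero, by
      intro h
      exact π.val.zero_not_over (Finset.mem_of_mem_erase h), by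
      show wt π.val.count + _ = _
      have he : (∑ k ∈ π.val.overParts.erase (N+1), k) + (N+1) = ∑ k ∈ π.val.overParts, k :=
        Finset.sum_erase_add _ _ π.2.2
      have h2 : wt π.val.count + ∑ k ∈ π.val.overParts, k = m := π.val.weight
      omega⟩, by
    intro p hp
    rcases hp with hp | hp
    · have h1 : p ≤ N+1 := π.2.1.1 p (Or.inl hp)
      have h2 : p ≠ N+1 := by
        intro hc
        rw [hc] at hp
        exact hp π.2.1.2
      omega
    · have h1 : p ≠ N+1 := Finset.ne_of_mem_erase hp
      have h2 : p ≤ N+1 := π.2.1.1 p (Or.inr (Finset.mem_of_mem_erase hp))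
      omega⟩
  invFun σ := ⟨⟨σ.val.count, insert (N+1) σ.val.overParts, σ.val.count_zero, by
      intro h
      rcases Finset.mem_insert.mp h with h | h
      · omega
      · exact σ.val.zero_not_over h, by
      show wt σ.val.count + _ = _
      have hnotin : (N+1) ∉ σ.val.overParts := by
        intro hc
        have := σ.2 (N+1) (Or.inr hc)
        omega
      rw [Finset.sum_insert hnotin]
      have h2 : wt σ.val.count + ∑ k ∈ σ.val.overParts, k = m - (N+1) := σ.val.weight
      omega⟩, by
    refine ⟨⟨?_, ?_⟩, Finset.mem_insert_self _ _⟩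
    · intro p hp
      rcases hp with hp | hp
      · exact le_trans (σ.2 p (Or.inl hp)) (by omega)
      · rcases Finset.mem_insert.mp hp with h | h
        · omega
        · exact le_trans (σ.2 p (Or.inr h)) (by omega)
    · show σ.val.count (N+1) = 0
      by_contra hc
      have := σ.2 (N+1) (Or.inl hc)
      omega⟩
  left_inv π := by
    apply Subtype.ext
    apply OP.ext
    · rfl
    · show insert (N+1) (π.val.overParts.erase (N+1)) = π.val.overParts
      exact Finset.insert_erase π.2.2
  right_inv σ := by
    apply Subtype.ext
    apply OP.ext
    · rfl
    · show (insert (N+1) σ.val.overParts).erase (N+1) = σ.val.overParts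
      apply Finset.erase_insert
      intro hc
      have := σ.2 (N+1) (Or.inr hc)
      omega

noncomputable def equivX3 (N m : ℕ) :
    {π : Overpartition m // (Bnd (N+1) π ∧ π.count (N+1) = 0) ∧ (N+1) ∉ π.overParts}
      ≃ {π : Overpartition m // Bnd N π} := by
  apply Equiv.subtypeEquivRight
  intro π
  constructor
  · rintro ⟨⟨hb, hc⟩, ho⟩ p hp
    have h1 : p ≤ N+1 := hb p hp
    have h2 : p ≠ N+1 := by
      intro he
      subst he
      rcases hp with hp | hp
      · exact hp hc
      · exact ho hp
    omega
  · intro hb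
    refine ⟨⟨fun p hp => le_trans (hb p hp) (by omega), ?_⟩, ?_⟩
    · by_contra hc
      have := hb (N+1) (Or.inl hc)
      omega
    · intro hc
      have := hb (N+1) (Or.inr hc)
      omega

lemma bb_rec (N m : ℕ) (hd : N+1 ≤ m) :
    bb (N+1) m = bb (N+1) (m-(N+1)) + (bb N m + bb N (m-(N+1))) := by
  classical
  have h1 : bb (N+1) m
      = Nat.card {π : Overpartition m // Bnd (N+1) π ∧ π.count (N+1) = 0}
        + Nat.card {π : Overpartition m // Bnd (N+1) π ∧ ¬ (π.count (N+1) = 0)} :=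
    card_split _ _
  have h2 : Nat.card {π : Overpartition m // Bnd (N+1) π ∧ ¬ (π.count (N+1) = 0)}
      = bb (N+1) (m-(N+1)) := Nat.card_congr (equivX1 N m hd)
  have h3 : Nat.card {π : Overpartition m // Bnd (N+1) π ∧ π.count (N+1) = 0}
      = Nat.card {π : Overpartition m // (Bnd (N+1) π ∧ π.count (N+1) = 0) ∧ (N+1) ∈ π.overParts}
        + Nat.card {π : Overpartition m //
            (Bnd (N+1) π ∧ π.count (N+1) = 0) ∧ (N+1) ∉ π.overParts} :=
    card_split _ _
  have h4 : Nat.card {π : Overpartition m // (Bnd (N+1) π ∧ π.count (N+1) = 0) ∧ (N+1) ∈ π.overParts}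
      = bb N (m-(N+1)) := Nat.card_congr (equivX2 N m hd)
  have h5 : Nat.card {π : Overpartition m // (Bnd (N+1) π ∧ π.count (N+1) = 0) ∧ (N+1) ∉ π.overParts}
      = bb N m := Nat.card_congr (equivX3 N m)
  rw [h1, h2, h3, h4, h5]
  omega

lemma bb_small (N m : ℕ) (hm : m < N+1) : bb (N+1) m = bb N m := by
  apply Nat.card_congr
  apply Equiv.subtypeEquivRight
  intro π
  constructor
  · intro hb p hp
    rcases hp with hp | hp
    · exact le_trans (parts_le π hp) (by omega)
    · exact le_trans (over_le π hp) (by omega)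
  · intro hb p hp
    exact le_trans (hb p hp) (by omega)

lemma bb_zero (m : ℕ) (hm : m ≠ 0) : bb 0 m = 0 := by
  rw [bb]
  rw [Nat.card_eq_zero]
  left
  constructor
  intro π
  have hc : wt π.val.count = 0 := by
    rw [wt, Finsupp.sum, Finset.sum_eq_zero]
    intro p hp
    have hp' : π.val.count p ≠ 0 := Finsupp.mem_support_iff.mp hp
    have hple := π.2 p (Or.inl hp')
    have hp0 : p = 0 := by omega
    rw [hp0] at hp'
    exact absurd π.val.count_zero hp'
  have ho : ∑ k ∈ π.val.overParts, k = 0 := by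
    rw [Finset.sum_eq_zero]
    intro p hp
    have := π.2 p (Or.inr hp)
    omega
  have hw : wt π.val.count + ∑ k ∈ π.val.overParts, k = m := π.val.weight
  omega

end Rec


section Bridge
open PowerSeries

noncomputable def PB (N : ℕ) : R := PowerSeries.mk fun r => (bb N r : ℤ)

noncomputable def Pser : R := PowerSeries.mk fun r => (pbar r : ℤ)

lemma PB_zero : PB 0 = 1 := by
  apply PowerSeries.ext
  intro r
  rw [PB, coeff_mk, PowerSeries.coeff_one]
  rcases r with _ | r
  · rw [if_pos rfl, bb_eq_pbar le_rfl, pbar_zero]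
    rfl
  · rw [if_neg (by omega), bb_zero _ (by omega)]
    rfl

lemma PB_step (N : ℕ) : PB (N+1) * om (N+1) = PB N * opl (N+1) := by
  apply PowerSeries.ext
  intro r
  rw [om, opl, mul_sub, mul_add, mul_one, mul_one, map_sub, map_add,
    PowerSeries.coeff_mul_X_pow', PowerSeries.coeff_mul_X_pow']
  rcases le_or_gt (N+1) r with h | h
  · rw [if_pos h, if_pos h]
    simp only [PB, coeff_mk]
    have := bb_rec N r h
    push_cast
    omega
  · rw [if_neg (by omega), if_neg (by omega)]
    simp only [PB, coeff_mk]
    have := bb_small N r h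
    push_cast
    omega

lemma PB_prod (N : ℕ) : PB N * ∏ i ∈ range N, om (i+1) = ∏ i ∈ range N, opl (i+1) := by
  induction N with
  | zero => simp [PB_zero]
  | succ N ih =>
    rw [Finset.prod_range_succ, Finset.prod_range_succ]
    calc PB (N+1) * ((∏ i ∈ range N, om (i+1)) * om (N+1))
        = (PB (N+1) * om (N+1)) * ∏ i ∈ range N, om (i+1) := by ring
      _ = (PB N * opl (N+1)) * ∏ i ∈ range N, om (i+1) := by rw [PB_step]
      _ = (PB N * ∏ i ∈ range N, om (i+1)) * opl (N+1) := by ring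
      _ = (∏ i ∈ range N, opl (i+1)) * opl (N+1) := by rw [ih]

lemma Pser_bridge : ∀ N r, r ≤ N →
    coeff r (Pser * ∏ i ∈ range N, om (i+1)) = coeff r (∏ i ∈ range N, opl (i+1)) := by
  intro N r hr
  have h1 : coeff r (Pser * ∏ i ∈ range N, om (i+1))
      = coeff r (PB N * ∏ i ∈ range N, om (i+1)) := by
    refine coeff_mul_congr ?_ (fun _ _ => rfl)
    intro r' hr'
    rw [Pser, PB, coeff_mk, coeff_mk, bb_eq_pbar (by omega)]
  rw [h1, PB_prod]

theorem gauss (m : ℕ) (hm : 1 ≤ m) :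
    (pbar m : ℤ) + 2 * ∑ t ∈ Icc 1 (Nat.sqrt m), (-1:ℤ)^t * (pbar (m - t*t) : ℤ) = 0 := by
  have h := alg_main Pser Pser_bridge m
  rw [if_neg (by omega)] at h
  rw [Pser, coeff_mk] at h
  have hs : ∀ t ∈ Icc 1 (Nat.sqrt m), (-1:ℤ)^t * (coeff (m - t*t)) (PowerSeries.mk fun r => ((pbar r : ℤ)))
      = (-1:ℤ)^t * (pbar (m - t*t) : ℤ) := by
    intro t _
    rw [coeff_mk]
  rw [Finset.sum_congr rfl hs] at h
  exact h

end Bridge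


section Mex

variable {n : ℕ}

lemma mex_mem (π : Overpartition n) :
    (mex21 π) % 2 = 1 ∧ π.count (mex21 π) = 0 := by
  have hne : {m : ℕ | m % 2 = 1 ∧ π.count m = 0}.Nonempty := by
    refine ⟨2*n+1, by omega, ?_⟩
    by_contra h
    have := parts_le π h
    omega
  exact Nat.sInf_mem hne

lemma mex_notlt (π : Overpartition n) {m : ℕ} (hm : m < mex21 π) :
    ¬ (m % 2 = 1 ∧ π.count m = 0) :=
  Nat.notMem_of_lt_sInf hm

noncomputable def stc (j : ℕ) : ℕ →₀ ℕ := ∑ i ∈ range j, Finsupp.single (2*i+1) 1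

lemma stc_apply (j p : ℕ) : stc j p = if (p % 2 = 1 ∧ p < 2*j) then 1 else 0 := by
  induction j with
  | zero =>
    rw [stc]
    simp
  | succ j ih =>
    have h1 : stc (j+1) = stc j + Finsupp.single (2*j+1) 1 := by
      rw [stc, stc, Finset.sum_range_succ]
    rw [h1, Finsupp.add_apply, ih, Finsupp.single_apply]
    split_ifs <;> omega

lemma stc_wt (j : ℕ) : wt (stc j) = j*j := by
  induction j with
  | zero => rw [stc]; simp [wt]
  | succ j ih =>
    have h1 : stc (j+1) = stc j + Finsupp.single (2*j+1) 1 := by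
      rw [stc, stc, Finset.sum_range_succ]
    rw [h1, wt_add, wt_single, ih]
    ring

lemma stc_le_count (π : Overpartition n) {j : ℕ} (hj : 2*j+1 ≤ mex21 π) :
    stc j ≤ π.count := by
  rw [Finsupp.le_def]
  intro p
  rw [stc_apply]
  split_ifs with h
  · by_contra hc
    have hc0 : π.count p = 0 := by omega
    exact mex_notlt π (by omega : p < mex21 π) ⟨h.1, hc0⟩
  · omega

lemma wt_mono {f g : ℕ →₀ ℕ} (h : f ≤ g) : wt f ≤ wt g := by
  have := tsub_add_cancel_of_le h
  calc wt f ≤ wt (g - f) + wt f := by omega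
    _ = wt (g - f + f) := (wt_add _ _).symm
    _ = wt g := by rw [this]

noncomputable def equivStair (n j : ℕ) (hj : j*j ≤ n) :
    {π : Overpartition n // 2*j+1 ≤ mex21 π} ≃ Overpartition (n - j*j) where
  toFun π := {
    count := π.val.count - stc j
    overParts := π.val.overParts
    count_zero := by
      rw [Finsupp.tsub_apply, π.val.count_zero]
      exact Nat.zero_sub _
    zero_not_over := π.val.zero_not_over
    weight := by
      show wt (π.val.count - stc j) + _ = _
      have hcancel : (π.val.count - stc j) + stc j = π.val.count :=
        tsub_add_cancel_of_le (stc_le_count π.val π.2)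
      have hw : wt (π.val.count - stc j) + j*j = wt π.val.count := by
        rw [← stc_wt j, ← wt_add, hcancel]
      have h2 : wt π.val.count + ∑ k ∈ π.val.overParts, k = n := π.val.weight
      omega }
  invFun σ := by
    refine ⟨{
      count := σ.count + stc j
      overParts := σ.overParts
      count_zero := by
        rw [Finsupp.add_apply, σ.count_zero, stc_apply, if_neg (by omega)]
      zero_not_over := σ.zero_not_over
      weight := by
        show wt (σ.count + stc j) + _ = _
        rw [wt_add, stc_wt]
        have h2 : wt σ.count + ∑ k ∈ σ.overParts, k = n - j*j := σ.weight
        omega }, ?_⟩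
    by_contra hc
    push_neg at hc
    set π' : Overpartition n := {
      count := σ.count + stc j
      overParts := σ.overParts
      count_zero := by
        rw [Finsupp.add_apply, σ.count_zero, stc_apply, if_neg (by omega)]
      zero_not_over := σ.zero_not_over
      weight := by
        show wt (σ.count + stc j) + _ = _
        rw [wt_add, stc_wt]
        have h2 : wt σ.count + ∑ k ∈ σ.overParts, k = n - j*j := σ.weight
        omega } with hπ'
    have hmem := mex_mem π'
    have hodd : mex21 π' % 2 = 1 := hmem.1
    have hcount : π'.count (mex21 π') = 0 := hmem.2
    have hc2 : ((σ.count + stc j : ℕ →₀ ℕ)) (mex21 π') = 0 := hcount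
    rw [Finsupp.add_apply, stc_apply, if_pos (by omega)] at hc2
    omega
  left_inv π := by
    apply Subtype.ext
    apply OP.ext
    · show (π.val.count - stc j) + stc j = π.val.count
      exact tsub_add_cancel_of_le (stc_le_count π.val π.2)
    · rfl
  right_inv σ := by
    apply OP.ext
    · show (σ.count + stc j) - stc j = σ.count
      exact add_tsub_cancel_right _ _
    · rfl

noncomputable def Acard (n j : ℕ) : ℕ := Nat.card {π : Overpartition n // 2*j+1 ≤ mex21 π}

lemma Acard_eq {j : ℕ} (hj : j*j ≤ n) : Acard n j = pbar (n - j*j) :=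
  Nat.card_congr (equivStair n j hj)

lemma A_isEmpty {j : ℕ} (hj : n < j*j) : IsEmpty {π : Overpartition n // 2*j+1 ≤ mex21 π} := by
  constructor
  intro π
  have hle := stc_le_count π.val π.2
  have h1 : j*j ≤ wt π.val.count := stc_wt j ▸ wt_mono hle
  have h2 : wt π.val.count + ∑ k ∈ π.val.overParts, k = n := π.val.weight
  omega

lemma Acard_zero {j : ℕ} (hj : n < j*j) : Acard n j = 0 := by
  rw [Acard]
  have := A_isEmpty (n := n) hj
  exact Nat.card_of_isEmpty

lemma Acard_val (n j : ℕ) :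
    (Acard n j : ℤ) = if j*j ≤ n then (pbar (n - j*j) : ℤ) else 0 := by
  rcases le_or_gt (j*j) n with h | h
  · rw [if_pos h, Acard_eq h]
  · rw [if_neg (by omega), Acard_zero h]
    rfl

lemma A_split (n i : ℕ) : Acard n i = op21 n i + op21 n (i+1) := by
  classical
  have h1 : Acard n i
      = Nat.card {π : Overpartition n // 2*i+1 ≤ mex21 π ∧ mex21 π % 4 = (2*i+1) % 4}
        + Nat.card {π : Overpartition n // 2*i+1 ≤ mex21 π ∧ ¬ (mex21 π % 4 = (2*i+1) % 4)} :=
    card_split _ _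
  have h2 : Nat.card {π : Overpartition n // 2*i+1 ≤ mex21 π ∧ ¬ (mex21 π % 4 = (2*i+1) % 4)}
      = op21 n (i+1) := by
    rw [op21]
    apply Nat.card_congr
    apply Equiv.subtypeEquivRight
    intro π
    have hodd := (mex_mem π).1
    constructor
    · rintro ⟨ha, hb⟩
      omega
    · rintro ⟨ha, hb⟩
      omega
  have h3 : Nat.card {π : Overpartition n // 2*i+1 ≤ mex21 π ∧ mex21 π % 4 = (2*i+1) % 4}
      = op21 n i := by
    rw [op21]
  rw [h1, h2, h3]

lemma op21_zero {i : ℕ} (hj : n < i*i) : op21 n i = 0 := by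
  rw [op21]
  have hA := A_isEmpty (n := n) hj
  have : IsEmpty {π : Overpartition n // 2*i+1 ≤ mex21 π ∧ mex21 π % 4 = (2*i+1) % 4} := by
    constructor
    intro x
    exact hA.false ⟨x.val, by
      have := x.2.1
      omega⟩
  exact Nat.card_of_isEmpty

lemma telescope (a b : ℕ → ℤ) (hab : ∀ i, a i = b i + b (i+1)) (i0 : ℕ) :
    ∀ L, ∑ t ∈ range L, (-1:ℤ)^t * a (i0 + t) = b i0 - (-1:ℤ)^L * b (i0 + L) := by
  intro L
  induction L with
  | zero => simp
  | succ L ih =>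
    rw [Finset.sum_range_succ, ih, hab (i0 + L), pow_succ]
    rw [show i0 + (L+1) = (i0 + L) + 1 by omega]
    ring

end Mex


section Final

lemma pbarZ_eq_Acard (n j : ℕ) : (pbarZ ((n : ℤ) - (j : ℤ)^2) : ℤ) = (Acard n j : ℤ) := by
  rw [Acard_val]
  rcases le_or_gt (j*j) n with h | h
  · rw [if_pos h]
    have he : (n:ℤ) - (j:ℤ)^2 = ((n - j*j : ℕ) : ℤ) := by
      push_cast [h]
      ring
    rw [pbarZ, he, if_neg (by exact Int.not_lt.mpr (Int.natCast_nonneg _)), Int.toNat_natCast]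
  · rw [if_neg (by omega)]
    have he : (n:ℤ) - (j:ℤ)^2 < 0 := by
      have hc : ((n:ℕ):ℤ) < ((j*j : ℕ):ℤ) := by exact_mod_cast h
      push_cast at hc
      nlinarith
    rw [pbarZ, if_pos he]
    rfl

theorem main_assembly (n k : ℕ) (hn : 1 ≤ n) (hk : 1 ≤ k) :
    (-1 : ℤ) ^ k * ((pbar n : ℤ) +
        2 * ∑ j ∈ Finset.Icc 1 k, (-1 : ℤ) ^ j * pbarZ ((n : ℤ) - (j : ℤ) ^ 2)) =
      2 * op21 n (k + 1) := by
  classical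
  set J := n + k with hJ
  set s := Nat.sqrt n with hs
  -- rewrite the statement's sum via Acard
  have hsum_eq : ∀ K : ℕ, ∑ j ∈ Finset.Icc 1 K, (-1 : ℤ) ^ j * pbarZ ((n : ℤ) - (j : ℤ) ^ 2)
      = ∑ j ∈ Finset.Icc 1 K, (-1 : ℤ) ^ j * (Acard n j : ℤ) := by
    intro K
    refine Finset.sum_congr rfl ?_
    intro j _
    rw [pbarZ_eq_Acard]
  -- Gauss in Acard form over Icc 1 J
  have hss : s * s ≤ n := by
    have := Nat.sqrt_le' n
    simpa [pow_two] using this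
  have hlt : n < (s+1)*(s+1) := by
    have := Nat.lt_succ_sqrt' n
    simpa [pow_two, Nat.succ_eq_add_one] using this
  have hgauss : (pbar n : ℤ) + 2 * ∑ j ∈ Finset.Icc 1 J, (-1:ℤ)^j * (Acard n j : ℤ) = 0 := by
    have h0 := gauss n hn
    have hext : ∑ t ∈ Finset.Icc 1 s, (-1:ℤ)^t * (pbar (n - t*t) : ℤ)
        = ∑ j ∈ Finset.Icc 1 J, (-1:ℤ)^j * (Acard n j : ℤ) := by
      have h1 : ∑ t ∈ Finset.Icc 1 s, (-1:ℤ)^t * (Acard n t : ℤ)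
          = ∑ j ∈ Finset.Icc 1 J, (-1:ℤ)^j * (Acard n j : ℤ) := by
        refine Finset.sum_subset ?_ ?_
        · intro x hx
          rw [Finset.mem_Icc] at *
          have : s ≤ n := Nat.sqrt_le_self n
          constructor
          · exact hx.1
          · omega
        · intro x hx hnx
          rw [Finset.mem_Icc] at hx hnx
          have hxs : s + 1 ≤ x := by omega
          have hxx : n < x * x := lt_of_lt_of_le hlt (Nat.mul_le_mul hxs hxs)
          rw [Acard_zero hxx]
          simp
      rw [← h1]
      refine Finset.sum_congr rfl ?_
      intro t ht
      rw [Finset.mem_Icc] at ht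
      have htt : t * t ≤ n := le_trans (Nat.mul_le_mul ht.2 ht.2) hss
      rw [Acard_eq htt]
    rw [← hext]
    exact h0
  -- split Icc 1 J
  have hkJ : k ≤ J := by omega
  have hIoc : ∀ K : ℕ, Finset.Icc 1 K = Finset.Ioc 0 K := by
    intro K
    ext x
    simp only [Finset.mem_Icc, Finset.mem_Ioc]
    omega
  have hsplit : ∑ j ∈ Finset.Icc 1 J, (-1:ℤ)^j * (Acard n j : ℤ)
      = (∑ j ∈ Finset.Icc 1 k, (-1:ℤ)^j * (Acard n j : ℤ))
        + ∑ j ∈ Finset.Ioc k J, (-1:ℤ)^j * (Acard n j : ℤ) := by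
    rw [hIoc J, hIoc k]
    exact (Finset.sum_Ioc_consecutive _ (by omega) hkJ).symm
  -- tail evaluation
  have htail : ∑ j ∈ Finset.Ioc k J, (-1:ℤ)^j * (Acard n j : ℤ)
      = (-1:ℤ)^(k+1) * (op21 n (k+1) : ℤ) := by
    have hIco : Finset.Ioc k J = Finset.Ico (k+1) (J+1) := by
      ext x
      simp only [Finset.mem_Ioc, Finset.mem_Ico]
      omega
    rw [hIco, Finset.sum_Ico_eq_sum_range]
    have hJk : J + 1 - (k+1) = n := by omega
    rw [hJk]
    have hterm : ∀ i ∈ Finset.range n, (-1:ℤ)^(k+1+i) * (Acard n (k+1+i) : ℤ)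
        = (-1:ℤ)^(k+1) * ((-1:ℤ)^i * (Acard n ((k+1)+i) : ℤ)) := by
      intro i _
      rw [pow_add]
      ring
    rw [Finset.sum_congr rfl hterm, ← Finset.mul_sum]
    have hab : ∀ i, (Acard n i : ℤ) = (op21 n i : ℤ) + (op21 n (i+1) : ℤ) := by
      intro i
      have := A_split n i
      push_cast [this]
      ring
    rw [telescope (fun i => (Acard n i : ℤ)) (fun i => (op21 n i : ℤ)) hab (k+1) n]
    have hzero : op21 n (k+1+n) = 0 := by
      apply op21_zero
      have h1 : n < k+1+n := by omega
      have h2 : k+1+n ≤ (k+1+n)*(k+1+n) := Nat.le_mul_of_pos_left _ (by omega)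
      omega
    rw [hzero]
    push_cast
    ring
  -- final algebra
  rw [hsum_eq k]
  have key : (pbar n : ℤ) + 2 * ∑ j ∈ Finset.Icc 1 k, (-1:ℤ)^j * (Acard n j : ℤ)
      = -2 * ((-1:ℤ)^(k+1) * (op21 n (k+1) : ℤ)) := by
    rw [hsplit, htail] at hgauss
    linarith
  rw [key]
  have hpow : (-1:ℤ)^k * (-1:ℤ)^(k+1) = -1 := by
    rw [← pow_add]
    exact Odd.neg_one_pow ⟨k, by omega⟩
  calc (-1:ℤ)^k * (-2 * ((-1:ℤ)^(k+1) * (op21 n (k+1) : ℤ)))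
      = -2 * ((-1:ℤ)^k * (-1:ℤ)^(k+1)) * (op21 n (k+1) : ℤ) := by ring
    _ = 2 * (op21 n (k+1) : ℤ) := by rw [hpow]; ring

end Final

end TG

theorem truncated_gauss_op21 (n k : ℕ) (hn : 1 ≤ n) (hk : 1 ≤ k) :
    (-1 : ℤ) ^ k * ((pbar n : ℤ) +
        2 * ∑ j ∈ Finset.Icc 1 k, (-1 : ℤ) ^ j * pbarZ ((n : ℤ) - (j : ℤ) ^ 2)) =
      2 * op21 n (k + 1) := TG.main_assembly n k hn hk
end
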